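/- arXiv:1807.02868 — 4 statements merged into one kernel-verified Lean document; each statement's English description precedes it below -/
import Mathlib

section
/- Let 𝔊 = (W,R) be a finite rooted reflexive-transitive Kripke frame (rooted: there is r ∈ W with rRx for all x ∈ W) that is not subreducible to any of the forbidden frames 𝔅₁, 𝔅₂, 𝔅₃, 𝔅₄, 𝔅₅. Then some crown frame 𝔠_n is subreducible to 𝔊: there is a generated subframe of 𝔠_n admitting a surjective p-morphism onto 𝔊. -/
/-- The accessibility relation `Q_n` of the crown frame `𝔠_n` on worlds `Fin (2n+1)`,
where world `0` is the root `r` and world `i` (for `1 ≤ i ≤ 2n`) is `sᵢ`: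
the smallest reflexive relation such that the root sees every `sᵢ`, every even
`sᵢ` with `i < 2n` sees `s_{i-1}` and `s_{i+1}`, and `s_{2n}` sees `s_{2n-1}` and `s₁`. -/
def crownRel (n : ℕ) (x y : Fin (2 * n + 1)) : Prop :=
  x = y ∨ x.val = 0 ∨
    (x.val % 2 = 0 ∧ x.val ≠ 0 ∧
      (y.val + 1 = x.val ∨ y.val = x.val + 1 ∨ (x.val = 2 * n ∧ y.val = 1)))

/-- The forbidden frame `𝔅₁`: a two-element cluster with the total relation. -/
def B1Rel : Fin 2 → Fin 2 → Prop := fun _ _ => True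

/-- The forbidden frame `𝔅₂`: a two-element cluster `{0,1}` below a reflexive point `2`. -/
def B2Rel : Fin 3 → Fin 3 → Prop := fun x y => x.val ≤ 1 ∨ x = y

/-- The forbidden frame `𝔅₃` (the trident): a reflexive root `0` seeing three reflexive
endpoints `1`, `2`, `3`, each of which sees only itself. -/
def B3Rel : Fin 4 → Fin 4 → Prop := fun x y => x = 0 ∨ x = y

/-- The forbidden frame `𝔅₄`: a reflexive four-element chain `3 R 2 R 1 R 0`
(relation the reflexive-transitive closure). -/
def B4Rel : Fin 4 → Fin 4 → Prop := fun x y => y.val ≤ x.val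

/-- The forbidden frame `𝔅₅`: points `0,1,2,3` (points `1,2,3,4` of the paper) with the
relation the reflexive-transitive closure of `{(2,1),(1,0),(2,3)}`. -/
def B5Rel : Fin 4 → Fin 4 → Prop := fun x y => x = y ∨ x = 2 ∨ (x = 1 ∧ y = 0)

/-- A subset of a frame is upward closed (a generated subframe) if it contains all
successors of its elements. -/
def UpClosed {W : Type*} (R : W → W → Prop) (D : Set W) : Prop :=
  ∀ x ∈ D, ∀ y, R x y → y ∈ D

/-- `f` is a p-morphism from `(W,R)` to `(W',R')`. -/
def IsPMorphism {W W' : Type*} (R : W → W → Prop) (R' : W' → W' → Prop) (f : W → W') : Prop :=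
  (∀ x y, R x y → R' (f x) (f y)) ∧ (∀ x z, R' (f x) z → ∃ y, R x y ∧ f y = z)

/-- `(W,R)` is subreducible to `(W',R')`: some generated subframe of `(W,R)` admits a
surjective p-morphism onto `(W',R')`. -/
def Subreducible {W W' : Type*} (R : W → W → Prop) (R' : W' → W' → Prop) : Prop :=
  ∃ D : Set W, UpClosed R D ∧ ∃ f : D → W', Function.Surjective f ∧
    IsPMorphism (fun x y : D => R x.val y.val) R' f


section CrownAux

variable {W : Type*}

/-- A "straight" walk structure: `ChainFrom R a L b` means the list of (middle, maximal)
pairs `L` forms a walk `a -(i₁)- m₁ -(i₂)- m₂ - ... - b` where each middle `iₜ` sees both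
of its neighbouring maximals and nothing else (besides itself), and each `mₜ` is maximal. -/
def ChainFrom (R : W → W → Prop) : W → List (W × W) → W → Prop
  | a, [], b => a = b
  | a, p :: L, b =>
      R p.1 a ∧ R p.1 p.2 ∧ (∀ z, R p.1 z → z = p.1 ∨ z = a ∨ z = p.2) ∧
        (∀ z, R p.2 z → z = p.2) ∧ ChainFrom R p.2 L b

theorem chain_append {R : W → W → Prop} :
    ∀ (L : List (W × W)) (a b c : W) (L' : List (W × W)),
      ChainFrom R a L b → ChainFrom R b L' c → ChainFrom R a (L ++ L') c := by
  intro L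
  induction L with
  | nil => intro a b c L' h h'; cases h; simpa using h'
  | cons p L ih =>
      intro a b c L' h h'
      obtain ⟨h1, h2, h3, h4, h5⟩ := h
      exact ⟨h1, h2, h3, h4, ih _ _ _ _ h5 h'⟩

theorem chain_snd_max {R : W → W → Prop} :
    ∀ (L : List (W × W)) (a b : W), ChainFrom R a L b →
      ∀ p ∈ L, ∀ z, R p.2 z → z = p.2 := by
  intro L
  induction L with
  | nil => intro a b h p hp; simp at hp
  | cons q L ih =>
      intro a b h p hp
      obtain ⟨h1, h2, h3, h4, h5⟩ := h
      rcases List.mem_cons.1 hp with rfl | hp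
      · exact h4
      · exact ih _ _ h5 p hp

theorem chain_fact {R : W → W → Prop} (d : W × W) :
    ∀ (L : List (W × W)) (a b : W), ChainFrom R a L b →
      ∀ t, t < L.length →
        R (L.getD t d).1 (if t = 0 then a else (L.getD (t-1) d).2) ∧
        R (L.getD t d).1 (L.getD t d).2 ∧
        (∀ z, R (L.getD t d).1 z →
          z = (L.getD t d).1 ∨ z = (if t = 0 then a else (L.getD (t-1) d).2) ∨
            z = (L.getD t d).2) ∧
        (∀ z, R (L.getD t d).2 z → z = (L.getD t d).2) := by
  intro L
  induction L with
  | nil => intro a b h t ht; simp at ht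
  | cons p L ih =>
      intro a b h t ht
      obtain ⟨h1, h2, h3, h4, h5⟩ := h
      match t with
      | 0 => simpa using ⟨h1, h2, h3, h4⟩
      | Nat.succ t =>
          have ht' : t < L.length := by simpa using ht
          have := ih p.2 b h5 t ht'
          have hprev : ((p :: L).getD (t+1-1) d).2 = (if t = 0 then p.2 else (L.getD (t-1) d).2) := by
            match t with
            | 0 => simp
            | Nat.succ s => simp [List.getD_cons_succ]
          simp only [List.getD_cons_succ, Nat.succ_ne_zero, if_false]
          rw [hprev]
          exact this

theorem chain_last {R : W → W → Prop} (d : W × W) :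
    ∀ (L : List (W × W)) (a b : W), ChainFrom R a L b → L ≠ [] →
      (L.getD (L.length - 1) d).2 = b := by
  intro L
  induction L with
  | nil => intro a b h hne; exact absurd rfl hne
  | cons p L ih =>
      intro a b h _
      obtain ⟨h1, h2, h3, h4, h5⟩ := h
      rcases List.eq_nil_or_concat L with rfl | hne
      · cases h5; simp
      · have hLne : L ≠ [] := by rcases hne with ⟨l, x, rfl⟩; simp
        have := ih p.2 b h5 hLne
        have hlen : (p :: L).length - 1 = (L.length - 1) + 1 := by
          have : 1 ≤ L.length := List.length_pos_iff.2 hLne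
          simp; omega
        rw [hlen, List.getD_cons_succ]
        exact this

/-- In a finite transitive antisymmetric frame every nonempty set has an element
maximal within the set. -/
theorem exists_max_in [Finite W] {R : W → W → Prop} (hrefl : Reflexive R) (htrans : Transitive R)
    (hanti : ∀ a b, R a b → R b a → a = b) :
    ∀ (n : ℕ) (S : Set W), S.ncard ≤ n → S.Nonempty →
      ∃ m ∈ S, ∀ y ∈ S, R m y → y = m := by
  intro n
  induction n with
  | zero =>
      intro S hcard hne
      have : S.ncard ≠ 0 := by
        have := Set.ncard_pos (Set.toFinite S) |>.2 hne
        omega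
      omega
  | succ n ih =>
      intro S hcard hne
      obtain ⟨x, hx⟩ := hne
      by_cases hmax : ∀ y ∈ S, R x y → y = x
      · exact ⟨x, hx, hmax⟩
      · push_neg at hmax
        obtain ⟨y, hy, hxy, hyx⟩ := hmax
        set S' : Set W := {z ∈ S | R y z} with hS'
        have hxS' : x ∉ S' := by
          intro hx'
          exact hyx (hanti _ _ hx'.2 hxy)
        have hss : S' ⊂ S := ⟨fun z hz => hz.1, fun hsub => hxS' (hsub hx)⟩
        have hlt : S'.ncard < S.ncard := Set.ncard_lt_ncard hss (Set.toFinite S)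
        obtain ⟨m, hm, hmmax⟩ := ih S' (by omega) ⟨y, hy, hrefl y⟩
        · exact ⟨m, hm.1, fun z hz hmz => hmmax z ⟨hz, htrans hm.2 hmz⟩ hmz⟩
theorem exists_max_above [Finite W] {R : W → W → Prop} (hrefl : Reflexive R)
    (htrans : Transitive R) (hanti : ∀ a b, R a b → R b a → a = b) (x : W) :
    ∃ m, R x m ∧ ∀ y, R m y → y = m := by
  obtain ⟨m, hm, hmax⟩ := exists_max_in hrefl htrans hanti ({y | R x y}.ncard)
    {y | R x y} le_rfl ⟨x, hrefl x⟩
  exact ⟨m, hm, fun y hy => hmax y (htrans hm hy) hy⟩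

theorem antisymm_of_forbidden [Finite W] {R : W → W → Prop} (hrefl : Reflexive R)
    (htrans : Transitive R) (h1 : ¬ Subreducible R B1Rel) (h2 : ¬ Subreducible R B2Rel) :
    ∀ a b, R a b → R b a → a = b := by
  classical
  intro a b hab hba
  by_contra hne
  set D : Set W := {x | R a x} with hD
  have hDup : UpClosed R D := fun x hx y hxy => htrans hx hxy
  have haD : a ∈ D := hrefl a
  have hbD : b ∈ D := hab
  by_cases hfin : ∀ u, R a u → R u a
  · -- final cluster: B1
    apply h1
    refine ⟨D, hDup, fun x => if x.val = a then 0 else 1, ?_, ?_, ?_⟩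
    · intro v
      match v with
      | 0 => exact ⟨⟨a, haD⟩, by simp⟩
      | 1 => exact ⟨⟨b, hbD⟩, by simp [Ne.symm hne]⟩
    · intro x y _; trivial
    · intro x z _
      match z with
      | 0 => exact ⟨⟨a, haD⟩, hfin x.val x.2, by simp⟩
      | 1 => exact ⟨⟨b, hbD⟩, htrans (hfin x.val x.2) hab, by simp [Ne.symm hne]⟩
  · push_neg at hfin
    obtain ⟨u, hau, hua⟩ := hfin
    have huD : u ∈ D := hau
    apply h2
    refine ⟨D, hDup, fun x => if R x.val a then (if x.val = a then 0 else 1) else 2, ?_, ?_, ?_⟩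
    · intro v
      match v with
      | 0 => exact ⟨⟨a, haD⟩, by simp [hrefl a]⟩
      | 1 => exact ⟨⟨b, hbD⟩, by simp [hba, Ne.symm hne]⟩
      | 2 => exact ⟨⟨u, huD⟩, by simp [hua]⟩
    · intro x y hxy
      by_cases hx : R x.val a
      · left
        simp only [if_pos hx]
        split <;> simp
      · have hy : ¬ R y.val a := fun hy => hx (htrans hxy hy)
        right; simp [hx, hy]
    · intro x z hz
      by_cases hx : R x.val a
      · match z with
        | 0 => exact ⟨⟨a, haD⟩, hx, by simp [hrefl a]⟩
        | 1 => exact ⟨⟨b, hbD⟩, htrans hx hab, by simp [hba, Ne.symm hne]⟩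
        | 2 => exact ⟨⟨u, huD⟩, htrans hx hau, by simp [hua]⟩
      · have hz' : B2Rel 2 z := by simpa [hx] using hz
        rcases hz' with hz' | hz'
        · simp at hz'
        · exact ⟨x, hrefl x.val, by simp [hx, ← hz']⟩
theorem sub_B3 {R : W → W → Prop} (hrefl : Reflexive R) (htrans : Transitive R)
    (i m1 m2 m3 : W) (hm1 : R i m1) (hm2 : R i m2) (hm3 : R i m3)
    (hM1 : ∀ z, R m1 z → z = m1) (hM2 : ∀ z, R m2 z → z = m2) (hM3 : ∀ z, R m3 z → z = m3)
    (d12 : m1 ≠ m2) (d13 : m1 ≠ m3) (d23 : m2 ≠ m3)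
    (hiM : ¬ (∀ z, R i z → z = i)) (hgood : ∀ z, R i z → z = i ∨ ∀ u, R z u → u = z) :
    Subreducible R B3Rel := by
  classical
  have di1 : i ≠ m1 := fun h => hiM (h ▸ hM1)
  have di2 : i ≠ m2 := fun h => hiM (h ▸ hM2)
  have di3 : i ≠ m3 := fun h => hiM (h ▸ hM3)
  set D : Set W := {x | R i x} with hD
  have hDup : UpClosed R D := fun x hx y hxy => htrans hx hxy
  set g : W → Fin 4 := fun w =>
    if w = m1 then 1 else if w = m2 then 2 else if w = i then 0 else 3 with hg
  have gi : g i = 0 := by simp [hg, di1, di2]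
  have g1 : g m1 = 1 := by simp [hg]
  have g2 : g m2 = 2 := by simp [hg, Ne.symm d12]
  have g3 : g m3 = 3 := by simp [hg, Ne.symm d13, Ne.symm d23, Ne.symm di3]
  refine ⟨D, hDup, fun x => g x.val, ?_, ?_, ?_⟩
  · intro v
    match v with
    | 0 => exact ⟨⟨i, hrefl i⟩, gi⟩
    | 1 => exact ⟨⟨m1, hm1⟩, g1⟩
    | 2 => exact ⟨⟨m2, hm2⟩, g2⟩
    | 3 => exact ⟨⟨m3, hm3⟩, g3⟩
  · intro x y hxy
    by_cases hx : x.val = i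
    · left; show g x.val = 0; rw [hx, gi]
    · rcases hgood x.val x.2 with h | h
      · exact absurd h hx
      · right
        have : x.val = y.val := (h y.val hxy).symm
        show g x.val = g y.val
        rw [this]
  · intro x z hz
    by_cases hx : x.val = i
    · have hxi : ∀ w, R i w → R x.val w := fun w hw => by rw [hx]; exact hw
      obtain rfl | rfl | rfl | rfl : z = 0 ∨ z = 1 ∨ z = 2 ∨ z = 3 := by
        have := z.isLt; omega
      · exact ⟨⟨i, hrefl i⟩, hxi i (hrefl i), gi⟩
      · exact ⟨⟨m1, hm1⟩, hxi m1 hm1, g1⟩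
      · exact ⟨⟨m2, hm2⟩, hxi m2 hm2, g2⟩
      · exact ⟨⟨m3, hm3⟩, hxi m3 hm3, g3⟩
    · rcases hz with hz | hz
      · -- g x = 0 forces x = i
        exfalso
        apply hx
        by_contra hxi
        have : g x.val = 0 := hz
        rw [hg] at this; simp only at this
        by_cases e1 : x.val = m1
        · rw [if_pos e1] at this; exact absurd this (by decide)
        · rw [if_neg e1] at this
          by_cases e2 : x.val = m2
          · rw [if_pos e2] at this; exact absurd this (by decide)
          · rw [if_neg e2, if_neg hxi] at this; exact absurd this (by decide)
      · exact ⟨x, hrefl x.val, hz⟩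

theorem sub_B4 [Finite W] {R : W → W → Prop} (hrefl : Reflexive R) (htrans : Transitive R)
    (hanti : ∀ a b, R a b → R b a → a = b)
    (a b c d : W) (hab : R a b) (hbc : R b c) (hcd : R c d)
    (nab : a ≠ b) (nbc : b ≠ c) (ncd : c ≠ d) :
    Subreducible R B4Rel := by
  classical
  set M : W → Prop := fun x => ∀ z, R x z → z = x with hM
  set L1 : W → Prop := fun x => ∀ z, R x z → z = x ∨ M z with hL1
  set L2 : W → Prop := fun x => ∀ z, R x z → z = x ∨ M z ∨ L1 z with hL2
  set f : W → Fin 4 := fun x => if M x then 0 else if L1 x then 1 else if L2 x then 2 else 3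
    with hf
  have fval0 : ∀ x, M x → f x = 0 := by
    intro x h; rw [hf]; simp only; rw [if_pos h]
  have fval1 : ∀ x, ¬ M x → L1 x → f x = 1 := by
    intro x h h'; rw [hf]; simp only; rw [if_neg h, if_pos h']
  have fval2 : ∀ x, ¬ M x → ¬ L1 x → L2 x → f x = 2 := by
    intro x h h' h''; rw [hf]; simp only; rw [if_neg h, if_neg h', if_pos h'']
  have fval3 : ∀ x, ¬ M x → ¬ L1 x → ¬ L2 x → f x = 3 := by
    intro x h h' h''; rw [hf]; simp only; rw [if_neg h, if_neg h', if_neg h'']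
  have w0 : ∀ x, ∃ y, R x y ∧ f y = 0 := by
    intro x
    obtain ⟨m, hm, hmax⟩ := exists_max_above hrefl htrans hanti x
    exact ⟨m, hm, fval0 m hmax⟩
  have w1 : ∀ x, ¬ L1 x → ∃ y, R x y ∧ f y = 1 := by
    intro x hx
    have hne : ({y | R x y ∧ ¬ M y} : Set W).Nonempty := by
      have hx' : ¬ ∀ z, R x z → (z = x ∨ M z) := hx
      push_neg at hx'
      obtain ⟨z, hz1, hz2, hz3⟩ := hx'
      exact ⟨z, hz1, hz3⟩
    obtain ⟨m, hm, hmax⟩ := exists_max_in hrefl htrans hanti _ _ le_rfl hne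
    have hL1m : L1 m := by
      intro z hz
      by_cases hzm : z = m
      · exact Or.inl hzm
      · by_cases hMz : M z
        · exact Or.inr hMz
        · exact absurd (hmax z ⟨htrans hm.1 hz, hMz⟩ hz) hzm
    exact ⟨m, hm.1, fval1 m hm.2 hL1m⟩
  have w2 : ∀ x, ¬ L2 x → ∃ y, R x y ∧ f y = 2 := by
    intro x hx
    have hne : ({y | R x y ∧ ¬ M y ∧ ¬ L1 y} : Set W).Nonempty := by
      have hx' : ¬ ∀ z, R x z → (z = x ∨ M z ∨ L1 z) := hx
      push_neg at hx'
      obtain ⟨z, hz1, hz2, hz3, hz4⟩ := hx'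
      exact ⟨z, hz1, hz3, hz4⟩
    obtain ⟨m, hm, hmax⟩ := exists_max_in hrefl htrans hanti _ _ le_rfl hne
    have hL2m : L2 m := by
      intro z hz
      by_cases hzm : z = m
      · exact Or.inl hzm
      · by_cases hMz : M z
        · exact Or.inr (Or.inl hMz)
        · by_cases hL1z : L1 z
          · exact Or.inr (Or.inr hL1z)
          · exact absurd (hmax z ⟨htrans hm.1 hz, hMz, hL1z⟩ hz) hzm
    exact ⟨m, hm.1, fval2 m hm.2.1 hm.2.2 hL2m⟩
  have hMb : ¬ M b := fun h => nbc (h c hbc).symm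
  have hMc : ¬ M c := fun h => ncd (h d hcd).symm
  have hL1b : ¬ L1 b := by
    intro h; rcases h c hbc with h | h
    · exact nbc h.symm
    · exact hMc h
  have hMa : ¬ M a := fun h => nab (h b hab).symm
  have hL1a : ¬ L1 a := by
    intro h; rcases h b hab with h | h
    · exact nab h.symm
    · exact hMb h
  have hL2a : ¬ L2 a := by
    intro h; rcases h b hab with h | h | h
    · exact nab h.symm
    · exact hMb h
    · exact hL1b h
  have hfa : f a = 3 := fval3 a hMa hL1a hL2a
  refine ⟨Set.univ, fun x _ y _ => trivial, fun x => f x.val, ?_, ?_, ?_⟩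
  · intro v
    match v with
    | 3 => exact ⟨⟨a, trivial⟩, hfa⟩
    | 0 => obtain ⟨y, _, hy⟩ := w0 a; exact ⟨⟨y, trivial⟩, hy⟩
    | 1 => obtain ⟨y, _, hy⟩ := w1 a hL1a; exact ⟨⟨y, trivial⟩, hy⟩
    | 2 => obtain ⟨y, _, hy⟩ := w2 a hL2a; exact ⟨⟨y, trivial⟩, hy⟩
  · intro x y hxy
    show (f y.val).val ≤ (f x.val).val
    by_cases hexy : x.val = y.val
    · rw [hexy]
    by_cases hMy : M y.val
    · rw [fval0 _ hMy]; exact Nat.zero_le _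
    have hMx : ¬ M x.val := fun h => hexy ((h _ hxy).symm)
    by_cases hL1x : L1 x.val
    · rcases hL1x y.val hxy with h | h
      · exact absurd h.symm hexy
      · exact absurd h hMy
    by_cases hL1y : L1 y.val
    · rw [fval1 _ hMy hL1y]
      by_cases hL2x : L2 x.val
      · rw [fval2 _ hMx hL1x hL2x]; decide
      · rw [fval3 _ hMx hL1x hL2x]; decide
    by_cases hL2x : L2 x.val
    · rcases hL2x y.val hxy with h | h | h
      · exact absurd h.symm hexy
      · exact absurd h hMy
      · exact absurd h hL1y
    · rw [fval3 _ hMx hL1x hL2x]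
      have := (f y.val).isLt
      omega
  · intro x z hz
    have hzval : z.val ≤ (f x.val).val := hz
    by_cases hq : z = f x.val
    · exact ⟨x, hrefl x.val, hq.symm⟩
    have hne : z.val ≠ (f x.val).val := fun h => hq (Fin.ext h)
    have hMx : ¬ M x.val := by
      intro h
      rw [fval0 _ h] at hzval hne
      simp only [Fin.val_zero] at hzval hne
      omega
    have hz0 : z.val = 0 ∨ z.val = 1 ∨ z.val = 2 ∨ z.val = 3 := by
      have := z.isLt; omega
    rcases hz0 with h0 | h1 | h2 | h3
    · obtain ⟨y, hy1, hy2⟩ := w0 x.val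
      refine ⟨⟨y, trivial⟩, hy1, ?_⟩
      show f y = z
      rw [hy2]; exact (Fin.ext h0).symm
    · have hL1x : ¬ L1 x.val := by
        intro h
        rw [fval1 _ hMx h] at hzval hne
        simp only [Fin.val_one] at hzval hne
        omega
      obtain ⟨y, hy1, hy2⟩ := w1 x.val hL1x
      refine ⟨⟨y, trivial⟩, hy1, ?_⟩
      show f y = z
      rw [hy2]; exact (Fin.ext h1).symm
    · have hL1x : ¬ L1 x.val := by
        intro h
        rw [fval1 _ hMx h] at hzval
        simp only [Fin.val_one] at hzval
        omega
      have hL2x : ¬ L2 x.val := by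
        intro h
        rw [fval2 _ hMx hL1x h] at hzval hne
        have : ((2:Fin 4)).val = 2 := rfl
        omega
      obtain ⟨y, hy1, hy2⟩ := w2 x.val hL2x
      refine ⟨⟨y, trivial⟩, hy1, ?_⟩
      show f y = z
      rw [hy2]; exact (Fin.ext h2).symm
    · exfalso
      have := (f x.val).isLt
      omega
theorem crown_of_tour {R : W → W → Prop} (hrefl : Reflexive R)
    (r m0 : W) (hr : ∀ x, R r x) (T : List (W × W)) (hT : T ≠ [])
    (hchain : ChainFrom R m0 T m0) (hm0 : ∀ z, R m0 z → z = m0)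
    (hcov : ∀ w, w = r ∨ w ∈ m0 :: T.map Prod.snd ∨ w ∈ T.map Prod.fst) :
    ∃ n, 1 ≤ n ∧ Subreducible (crownRel n) R := by
  classical
  set n := T.length with hn
  have hn1 : 1 ≤ n := List.length_pos_iff.2 hT
  set d : W × W := (m0, m0) with hd
  set Mf : ℕ → W := fun t => if t = 0 then m0 else (T.getD (t-1) d).2 with hMf
  set If : ℕ → W := fun t => (T.getD t d).1 with hIf
  have hMf0 : Mf 0 = m0 := rfl
  have hMfs : ∀ t, Mf (t+1) = (T.getD t d).2 := by
    intro t; simp [hMf]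
  have hfact : ∀ t, t < n → R (If t) (Mf t) ∧ R (If t) (Mf (t+1)) ∧
      (∀ z, R (If t) z → z = If t ∨ z = Mf t ∨ z = Mf (t+1)) ∧
      (∀ z, R (Mf (t+1)) z → z = Mf (t+1)) := by
    intro t ht
    have h := chain_fact d T m0 m0 hchain t ht
    have e1 : (if t = 0 then m0 else (T.getD (t-1) d).2) = Mf t := rfl
    have e2 : (T.getD t d).2 = Mf (t+1) := (hMfs t).symm
    have e3 : (T.getD t d).1 = If t := rfl
    rw [e1, e2, e3] at h
    exact h
  have hMmax : ∀ t, t ≤ n → ∀ z, R (Mf t) z → z = Mf t := by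
    intro t ht
    match t with
    | 0 => rw [hMf0]; exact hm0
    | Nat.succ t => exact (hfact t (by omega)).2.2.2
  have hMn : Mf n = m0 := by
    have hlast := chain_last d T m0 m0 hchain hT
    have hne : n ≠ 0 := by omega
    have h1 : Mf n = (T.getD (n-1) d).2 := by
      simp only [hMf]
      rw [if_neg hne]
    rw [h1]
    exact hlast
  have hcov' : ∀ w, w = r ∨ (∃ t, t < n ∧ Mf t = w) ∨ (∃ t, t < n ∧ If t = w) := by
    intro w
    rcases hcov w with hw | hw | hw
    · exact Or.inl hw
    · rcases List.mem_cons.1 hw with hw | hw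
      · exact Or.inr (Or.inl ⟨0, by omega, by rw [hMf0, hw]⟩)
      · obtain ⟨p, hp, hpw⟩ := List.mem_map.1 hw
        obtain ⟨s, hs, hsp⟩ := List.mem_iff_getElem.1 hp
        have hval : Mf (s+1) = w := by
          rw [hMfs s, List.getD_eq_getElem T d hs, hsp, hpw]
        by_cases hsn : s + 1 < n
        · exact Or.inr (Or.inl ⟨s+1, hsn, hval⟩)
        · have : s + 1 = n := by rw [hn] at *; omega
          refine Or.inr (Or.inl ⟨0, by omega, ?_⟩)
          rw [hMf0, ← hMn, ← this, hval]
    · obtain ⟨p, hp, hpw⟩ := List.mem_map.1 hw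
      obtain ⟨s, hs, hsp⟩ := List.mem_iff_getElem.1 hp
      refine Or.inr (Or.inr ⟨s, by rw [hn] at *; omega, ?_⟩)
      rw [hIf]; simp only
      rw [List.getD_eq_getElem T d hs, hsp, hpw]
  set g : Fin (2*n+1) → W := fun j =>
    if j.val = 0 then r else if j.val % 2 = 1 then Mf ((j.val - 1)/2) else If (j.val/2 - 1)
    with hg
  have hg0 : ∀ j : Fin (2*n+1), j.val = 0 → g j = r := by
    intro j h; rw [hg]; simp only; rw [if_pos h]
  have hgodd : ∀ j : Fin (2*n+1), j.val % 2 = 1 → g j = Mf ((j.val - 1)/2) := by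
    intro j h
    rw [hg]; simp only
    rw [if_neg (by omega : ¬ j.val = 0), if_pos h]
  have hgeven : ∀ j : Fin (2*n+1), j.val % 2 = 0 → j.val ≠ 0 → g j = If (j.val/2 - 1) := by
    intro j h h'
    rw [hg]; simp only
    rw [if_neg h', if_neg (by omega : ¬ j.val % 2 = 1)]
  have ho : ∀ t, t < n → ∃ j : Fin (2*n+1), j.val = 2*t+1 ∧ g j = Mf t := by
    intro t ht
    have hjlt : 2*t+1 < 2*n+1 := by omega
    set j : Fin (2*n+1) := ⟨2*t+1, hjlt⟩ with hj
    have hjv : j.val = 2*t+1 := rfl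
    refine ⟨j, hjv, ?_⟩
    rw [hgodd j (by rw [hjv]; omega), hjv]
    congr 1
    omega
  have he : ∀ t, t < n → ∃ j : Fin (2*n+1), j.val = 2*t+2 ∧ g j = If t := by
    intro t ht
    have hjlt : 2*t+2 < 2*n+1 := by omega
    set j : Fin (2*n+1) := ⟨2*t+2, hjlt⟩ with hj
    have hjv : j.val = 2*t+2 := rfl
    refine ⟨j, hjv, ?_⟩
    rw [hgeven j (by rw [hjv]; omega) (by rw [hjv]; omega), hjv]
    congr 1
    omega
  refine ⟨n, hn1, Set.univ, fun x _ y _ => trivial, fun x => g x.val, ?_, ?_, ?_⟩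
  · -- surjective
    intro w
    rcases hcov' w with hw | ⟨t, ht, hw⟩ | ⟨t, ht, hw⟩
    · refine ⟨⟨⟨0, by omega⟩, trivial⟩, ?_⟩
      show g ⟨0, by omega⟩ = w
      rw [hg0 _ rfl]
      exact hw.symm
    · obtain ⟨j, hj1, hj2⟩ := ho t ht
      exact ⟨⟨j, trivial⟩, show g j = w by rw [hj2, hw]⟩
    · obtain ⟨j, hj1, hj2⟩ := he t ht
      exact ⟨⟨j, trivial⟩, show g j = w by rw [hj2, hw]⟩
  · -- forth
    intro x y hxy
    show R (g x.val) (g y.val)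
    rcases hxy with heq | h0 | ⟨hev, hne, hcase⟩
    · rw [heq]; exact hrefl _
    · rw [hg0 _ h0]; exact hr _
    · have hxlt := x.val.isLt
      set s : ℕ := x.val.val / 2 with hs
      have hs2 : x.val.val = 2*s := by omega
      have hs1 : 1 ≤ s := by omega
      have hsn : s ≤ n := by omega
      have hgx : g x.val = If (s-1) := by
        rw [hgeven _ hev hne]
      rcases hcase with hy | hy | ⟨h2n, hy1⟩
      · have hyodd : y.val.val % 2 = 1 := by omega
        have hgy : g y.val = Mf (s-1) := by
          rw [hgodd _ hyodd]
          congr 1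
          omega
        rw [hgx, hgy]
        exact (hfact (s-1) (by omega)).1
      · have hylt := y.val.isLt
        have hsn' : s < n := by omega
        have hyodd : y.val.val % 2 = 1 := by omega
        have hgy : g y.val = Mf ((s-1)+1) := by
          rw [hgodd _ hyodd]
          congr 1
          omega
        rw [hgx, hgy]
        exact (hfact (s-1) (by omega)).2.1
      · have hsn' : s = n := by omega
        have hyodd : y.val.val % 2 = 1 := by omega
        have hgy : g y.val = Mf 0 := by
          rw [hgodd _ hyodd]
          congr 1
          omega
        rw [hgx, hgy, hMf0, ← hMn, show n = (n-1)+1 by omega]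
        have := (hfact (n-1) (by omega)).2.1
        rw [show s - 1 = n - 1 by omega]
        exact this
  · -- back
    intro x z hz
    show ∃ y : ↥(Set.univ : Set (Fin (2*n+1))), crownRel n x.val y.val ∧ g y.val = z
    by_cases h0 : x.val.val = 0
    · rcases hcov' z with hw | ⟨t, ht, hw⟩ | ⟨t, ht, hw⟩
      · exact ⟨x, Or.inl rfl, show g x.val = z by rw [hg0 _ h0, hw]⟩
      · obtain ⟨j, hj1, hj2⟩ := ho t ht
        exact ⟨⟨j, trivial⟩, Or.inr (Or.inl h0), show g j = z by rw [hj2, hw]⟩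
      · obtain ⟨j, hj1, hj2⟩ := he t ht
        exact ⟨⟨j, trivial⟩, Or.inr (Or.inl h0), show g j = z by rw [hj2, hw]⟩
    · by_cases hpar : x.val.val % 2 = 1
      · have hxlt := x.val.isLt
        set t : ℕ := (x.val.val - 1)/2 with ht
        have htn : t < n := by omega
        have hgx : g x.val = Mf t := hgodd _ hpar
        have hz' : R (g x.val) z := hz
        rw [hgx] at hz'
        have hzz : z = Mf t := hMmax t (by omega) z hz'
        exact ⟨x, Or.inl rfl, show g x.val = z by rw [hgx, hzz]⟩
      · have hev : x.val.val % 2 = 0 := by omega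
        have hxlt := x.val.isLt
        set s : ℕ := x.val.val / 2 with hs
        have hs2 : x.val.val = 2*s := by omega
        have hs1 : 1 ≤ s := by omega
        have hsn : s ≤ n := by omega
        have hgx : g x.val = If (s-1) := hgeven _ hev h0
        have hz' : R (g x.val) z := hz
        rw [hgx] at hz'
        rcases (hfact (s-1) (by omega)).2.2.1 z hz' with hcz | hcz | hcz
        · exact ⟨x, Or.inl rfl, show g x.val = z by rw [hgx, hcz]⟩
        · obtain ⟨j, hj1, hj2⟩ := ho (s-1) (by omega)
          refine ⟨⟨j, trivial⟩, Or.inr (Or.inr ⟨hev, h0, Or.inl ?_⟩), ?_⟩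
          · show j.val + 1 = x.val.val
            rw [hj1]; omega
          · show g j = z
            rw [hj2, hcz]
        · by_cases hsn' : s < n
          · obtain ⟨j, hj1, hj2⟩ := ho s hsn'
            refine ⟨⟨j, trivial⟩, Or.inr (Or.inr ⟨hev, h0, Or.inr (Or.inl ?_)⟩), ?_⟩
            · show j.val = x.val.val + 1
              rw [hj1]; omega
            · show g j = z
              rw [hj2, hcz, show s - 1 + 1 = s by omega]
          · have hseq : s = n := by omega
            obtain ⟨j, hj1, hj2⟩ := ho 0 (by omega)
            refine ⟨⟨j, trivial⟩,
              Or.inr (Or.inr ⟨hev, h0, Or.inr (Or.inr ⟨?_, ?_⟩)⟩), ?_⟩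
            · show x.val.val = 2*n
              omega
            · show j.val = 1
              rw [hj1]
            · show g j = z
              rw [hj2, hcz, show s - 1 + 1 = n by omega, hMn, hMf0]
theorem twoMax [Finite W] {R : W → W → Prop} (hrefl : Reflexive R) (htrans : Transitive R)
    (hanti : ∀ a b, R a b → R b a → a = b) (h3 : ¬ Subreducible R B3Rel)
    (i : W) (hiM : ¬ ∀ z, R i z → z = i)
    (hgood : ∀ z, R i z → z = i ∨ ∀ u, R z u → u = z) :
    ∃ a b, (∀ z, R a z → z = a) ∧ (∀ z, R b z → z = b) ∧ R i a ∧ R i b ∧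
      ∀ z, R i z → z = i ∨ z = a ∨ z = b := by
  classical
  obtain ⟨a, hia, hMa⟩ := exists_max_above hrefl htrans hanti i
  by_cases hb : ∃ b, (∀ z, R b z → z = b) ∧ R i b ∧ b ≠ a
  · obtain ⟨b, hMb, hib, hba⟩ := hb
    by_cases hc : ∃ c, (∀ z, R c z → z = c) ∧ R i c ∧ c ≠ a ∧ c ≠ b
    · obtain ⟨c, hMc, hic, hca, hcb⟩ := hc
      exact absurd (sub_B3 hrefl htrans i a b c hia hib hic hMa hMb hMc
        (Ne.symm hba) (Ne.symm hca) (Ne.symm hcb) hiM hgood) h3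
    · push_neg at hc
      refine ⟨a, b, hMa, hMb, hia, hib, ?_⟩
      intro z hz
      rcases hgood z hz with h | h
      · exact Or.inl h
      · by_cases hza : z = a
        · exact Or.inr (Or.inl hza)
        · exact Or.inr (Or.inr (hc z h hz hza))
  · push_neg at hb
    refine ⟨a, a, hMa, hMa, hia, hia, ?_⟩
    intro z hz
    rcases hgood z hz with h | h
    · exact Or.inl h
    · exact Or.inr (Or.inl (hb z h hz))

/-- One straight step between maximal points, through a common lower neighbour. -/
def StepRel (R : W → W → Prop) : W → W → Prop := fun m m' =>
  (∀ z, R m z → z = m) ∧ (∀ z, R m' z → z = m') ∧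
    ∃ i, R i m ∧ R i m' ∧ ∀ z, R i z → z = i ∨ z = m ∨ z = m'

theorem stepRel_symm {R : W → W → Prop} : Symmetric (StepRel R) := by
  rintro a b ⟨h1, h2, i, hi1, hi2, hi3⟩
  refine ⟨h2, h1, i, hi2, hi1, fun z hz => ?_⟩
  rcases hi3 z hz with h | h | h
  exacts [Or.inl h, Or.inr (Or.inr h), Or.inr (Or.inl h)]

theorem reach_to_chain {R : W → W → Prop} {a b : W}
    (h : Relation.ReflTransGen (StepRel R) a b) :
    ∃ L, ChainFrom R a L b ∧ b ∈ a :: L.map Prod.snd := by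
  induction h with
  | refl => exact ⟨[], rfl, by simp⟩
  | @tail b c hab hbc ih =>
      obtain ⟨L, hL, _⟩ := ih
      obtain ⟨hMb, hMc, i, hib, hic, hstr⟩ := hbc
      refine ⟨L ++ [(i, c)], chain_append _ _ _ _ _ hL ⟨hib, hic, hstr, hMc, rfl⟩, ?_⟩
      simp

theorem chain_flatten {R : W → W → Prop} {m0 : W} :
    ∀ (Ls : List (List (W × W))), (∀ L ∈ Ls, ChainFrom R m0 L m0) →
      ChainFrom R m0 Ls.flatten m0 := by
  intro Ls
  induction Ls with
  | nil => intro _; exact rfl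
  | cons L Ls ih =>
      intro h
      rw [List.flatten_cons]
      exact chain_append _ _ _ _ _ (h L (by simp))
        (ih (fun L' hL' => h L' (by simp [hL'])))
end CrownAux

/-- Every finite rooted reflexive-transitive Kripke frame that is not subreducible to any
of the five forbidden frames is a p-morphic image of (a generated subframe of) some
crown frame. -/
theorem crown_subreducible_to_good_frame {W : Type*} [Finite W] (R : W → W → Prop)
    (hrefl : Reflexive R) (htrans : Transitive R) (hroot : ∃ r, ∀ x, R r x)
    (h1 : ¬ Subreducible R B1Rel) (h2 : ¬ Subreducible R B2Rel)
    (h3 : ¬ Subreducible R B3Rel) (h4 : ¬ Subreducible R B4Rel)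
    (h5 : ¬ Subreducible R B5Rel) :
    ∃ n, 1 ≤ n ∧ Subreducible (crownRel n) R := by
  classical
  obtain ⟨r, hr⟩ := hroot
  have hanti := antisymm_of_forbidden hrefl htrans h1 h2
  by_cases hMr : ∀ z, R r z → z = r
  · -- the frame is a single reflexive point
    refine crown_of_tour hrefl r r hr [(r, r)] (by simp)
      ⟨hrefl r, hrefl r, fun z hz => Or.inl (hMr z hz), hMr, rfl⟩ hMr ?_
    intro w
    exact Or.inl (hMr w (hr w))
  · -- depth ≥ 2
    have hF1 : ∀ x, x ≠ r → (¬ ∀ z, R x z → z = x) →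
        ∀ y, R x y → y = x ∨ ∀ u, R y u → u = y := by
      intro x hxr hxM y hxy
      by_cases hyx : y = x
      · exact Or.inl hyx
      by_cases hMy : ∀ u, R y u → u = y
      · exact Or.inr hMy
      · exfalso
        push_neg at hMy
        obtain ⟨z, hyz, hzy⟩ := hMy
        exact h4 (sub_B4 hrefl htrans hanti r x y z (hr x) hxy hyz
          (Ne.symm hxr) (fun h => hyx h.symm) (Ne.symm hzy))
    by_cases hGr : ∀ z, R r z → z = r ∨ ∀ u, R z u → u = z
    · -- depth exactly 2: at most two maximal points, the root acts as a middle point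
      obtain ⟨a, b, hMa, hMb, hra, hrb, hstr⟩ := twoMax hrefl htrans hanti h3 r hMr hGr
      refine crown_of_tour hrefl r a hr [(r, b), (r, a)] (by simp)
        ⟨hra, hrb, hstr, hMb, hrb, hra, ?_, hMa, rfl⟩ hMa ?_
      · intro z hz
        rcases hstr z hz with h | h | h
        exacts [Or.inl h, Or.inr (Or.inr h), Or.inr (Or.inl h)]
      · intro w
        rcases hstr w (hr w) with h | h | h
        · exact Or.inl h
        · exact Or.inr (Or.inl (by simp [h]))
        · exact Or.inr (Or.inl (by simp [h]))
    · -- general case: there is a genuine middle point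
      push_neg at hGr
      obtain ⟨i0, hri0, hi0r, hi0Me⟩ := hGr
      have hi0M : ¬ ∀ z, R i0 z → z = i0 := by
        intro h
        obtain ⟨u, hu1, hu2⟩ := hi0Me
        exact hu2 (h u hu1)
      -- two maximal points above each middle point
      have hABex : ∀ i : W, ∃ a b, (i ≠ r ∧ ¬(∀ z, R i z → z = i)) →
          ((∀ z, R a z → z = a) ∧ (∀ z, R b z → z = b) ∧ R i a ∧ R i b ∧
            ∀ z, R i z → z = i ∨ z = a ∨ z = b) := by
        intro i
        by_cases hi : i ≠ r ∧ ¬(∀ z, R i z → z = i)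
        · obtain ⟨a, b, h⟩ := twoMax hrefl htrans hanti h3 i hi.2 (hF1 i hi.1 hi.2)
          exact ⟨a, b, fun _ => h⟩
        · exact ⟨r, r, fun h => absurd h hi⟩
      choose A B hAB using hABex
      have hABi0 := hAB i0 ⟨hi0r, hi0M⟩
      set m0 := A i0 with hm0def
      have hMm0 : ∀ z, R m0 z → z = m0 := hABi0.1
      have hi0m0 : R i0 m0 := hABi0.2.2.1
      have hsymm : Symmetric (Relation.ReflTransGen (StepRel R)) :=
        by
          haveI : Std.Symm (StepRel R) := ⟨fun a b h => stepRel_symm h⟩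
          exact fun a b h => (Relation.ReflTransGen.symmetric : Std.Symm (Relation.ReflTransGen (StepRel R))).symm a b h
      -- connectivity: every maximal point is Step-reachable from m0
      have hconn : ∀ m, (∀ z, R m z → z = m) → Relation.ReflTransGen (StepRel R) m0 m := by
        by_contra hcon
        push_neg at hcon
        obtain ⟨w, hMw, hwR⟩ := hcon
        apply h5
        set f : W → Fin 4 := fun x =>
          if x = r then 2
          else if (∀ z, R x z → z = x) then
            (if Relation.ReflTransGen (StepRel R) m0 x then 0 else 3)
          else if (∃ m, ((∀ z, R m z → z = m) ∧ Relation.ReflTransGen (StepRel R) m0 m)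
            ∧ R x m) then 1 else 3 with hf
        have fr : f r = 2 := by simp [hf]
        have f0 : ∀ x, x ≠ r → (∀ z, R x z → z = x) →
            Relation.ReflTransGen (StepRel R) m0 x → f x = 0 := by
          intro x hx1 hx2 hx3
          simp only [hf]; rw [if_neg hx1, if_pos hx2, if_pos hx3]
        have f3M : ∀ x, x ≠ r → (∀ z, R x z → z = x) →
            ¬ Relation.ReflTransGen (StepRel R) m0 x → f x = 3 := by
          intro x hx1 hx2 hx3
          simp only [hf]; rw [if_neg hx1, if_pos hx2, if_neg hx3]
        have f1 : ∀ x, x ≠ r → ¬(∀ z, R x z → z = x) →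
            (∃ m, ((∀ z, R m z → z = m) ∧ Relation.ReflTransGen (StepRel R) m0 m) ∧ R x m) →
            f x = 1 := by
          intro x hx1 hx2 hx3
          simp only [hf]; rw [if_neg hx1, if_neg hx2, if_pos hx3]
        have f3m : ∀ x, x ≠ r → ¬(∀ z, R x z → z = x) →
            ¬(∃ m, ((∀ z, R m z → z = m) ∧ Relation.ReflTransGen (StepRel R) m0 m) ∧ R x m) →
            f x = 3 := by
          intro x hx1 hx2 hx3
          simp only [hf]; rw [if_neg hx1, if_neg hx2, if_neg hx3]
        have hm0r : m0 ≠ r := fun h => hMr (h ▸ hMm0)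
        have hwr : w ≠ r := fun h => hMr (h ▸ hMw)
        refine ⟨Set.univ, fun x _ y _ => trivial, fun x => f x.val, ?_, ?_, ?_⟩
        · -- surjective
          intro v
          have hv : v = 0 ∨ v = 1 ∨ v = 2 ∨ v = 3 := by
            have := v.isLt; omega
          rcases hv with rfl | rfl | rfl | rfl
          · exact ⟨⟨m0, trivial⟩, f0 m0 hm0r hMm0 Relation.ReflTransGen.refl⟩
          · exact ⟨⟨i0, trivial⟩, f1 i0 hi0r hi0M ⟨m0, ⟨hMm0,
              Relation.ReflTransGen.refl⟩, hi0m0⟩⟩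
          · exact ⟨⟨r, trivial⟩, fr⟩
          · exact ⟨⟨w, trivial⟩, f3M w hwr hMw hwR⟩
        · -- forth
          intro x y hxy
          show B5Rel (f x.val) (f y.val)
          by_cases hxr : x.val = r
          · right; left
            rw [hxr, fr]
          by_cases hMx : ∀ z, R x.val z → z = x.val
          · left
            rw [hMx y.val hxy]
          -- x is a middle point
          rcases hF1 x.val hxr hMx y.val hxy with hyx | hMy
          · left; rw [hyx]
          have hyr : y.val ≠ r := fun h => hMr (h ▸ hMy)
          by_cases hx1 : ∃ m, ((∀ z, R m z → z = m) ∧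
              Relation.ReflTransGen (StepRel R) m0 m) ∧ R x.val m
          · obtain ⟨m, ⟨hMm, hRm⟩, hxm⟩ := hx1
            have hfy : f y.val = 0 := by
              by_cases hym : y.val = m
              · exact f0 y.val hyr hMy (hym ▸ hRm)
              · -- Step from m to y through x
                have hstrx := (hAB x.val ⟨hxr, hMx⟩).2.2.2.2
                have hmx : m ≠ x.val := fun h => hMx (h ▸ hMm)
                have hyx' : y.val ≠ x.val := fun h => hMx (h ▸ hMy)
                have hmAB : m = A x.val ∨ m = B x.val := by
                  rcases hstrx m hxm with h | h | h
                  exacts [absurd h hmx, Or.inl h, Or.inr h]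
                have hyAB : y.val = A x.val ∨ y.val = B x.val := by
                  rcases hstrx y.val hxy with h | h | h
                  exacts [absurd h hyx', Or.inl h, Or.inr h]
                have hstr' : ∀ z, R x.val z → z = x.val ∨ z = m ∨ z = y.val := by
                  intro z hz
                  rcases hstrx z hz with h | h | h
                  · exact Or.inl h
                  · rcases hmAB with hm' | hm'
                    · exact Or.inr (Or.inl (h.trans hm'.symm))
                    · rcases hyAB with hy' | hy'
                      · exact Or.inr (Or.inr (h.trans hy'.symm))
                      · exact absurd (hm'.symm ▸ hy'.symm ▸ rfl : m = y.val)
                          (fun hq => hym (hq ▸ rfl))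
                  · rcases hmAB with hm' | hm'
                    · rcases hyAB with hy' | hy'
                      · exact absurd ((hm'.trans hy'.symm) : m = y.val)
                          (fun hq => hym (hq ▸ rfl))
                      · exact Or.inr (Or.inr (h.trans hy'.symm))
                    · exact Or.inr (Or.inl (h.trans hm'.symm))
                have hstep : StepRel R m y.val := ⟨hMm, hMy, x.val, hxm, hxy, hstr'⟩
                exact f0 y.val hyr hMy (hRm.tail hstep)
            right; right
            exact ⟨f1 x.val hxr hMx ⟨m, ⟨hMm, hRm⟩, hxm⟩, hfy⟩
          · have hfy : f y.val = 3 := by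
              refine f3M y.val hyr hMy ?_
              intro hRy
              exact hx1 ⟨y.val, ⟨hMy, hRy⟩, hxy⟩
            left
            rw [hfy, f3m x.val hxr hMx hx1]
        · -- back
          intro x z hz
          have hz' : B5Rel (f x.val) z := hz
          by_cases hxr : x.val = r
          · have hfx : f x.val = 2 := by rw [hxr, fr]
            have hv : z = 0 ∨ z = 1 ∨ z = 2 ∨ z = 3 := by
              have := z.isLt; omega
            rcases hv with rfl | rfl | rfl | rfl
            · refine ⟨⟨m0, trivial⟩, ?_, f0 m0 hm0r hMm0 Relation.ReflTransGen.refl⟩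
              show R x.val m0
              rw [hxr]; exact hr m0
            · refine ⟨⟨i0, trivial⟩, ?_, f1 i0 hi0r hi0M ⟨m0, ⟨hMm0,
                Relation.ReflTransGen.refl⟩, hi0m0⟩⟩
              show R x.val i0
              rw [hxr]; exact hr i0
            · exact ⟨x, hrefl x.val, hfx⟩
            · refine ⟨⟨w, trivial⟩, ?_, f3M w hwr hMw hwR⟩
              show R x.val w
              rw [hxr]; exact hr w
          by_cases hMx : ∀ z, R x.val z → z = x.val
          · by_cases hRx : Relation.ReflTransGen (StepRel R) m0 x.val
            · have hfx : f x.val = 0 := f0 x.val hxr hMx hRx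
              rw [hfx] at hz'
              rcases hz' with hq | hq | ⟨hq, _⟩
              · exact ⟨x, hrefl x.val, show f x.val = z by rw [hfx, hq]⟩
              · exact absurd hq (by decide)
              · exact absurd hq (by decide)
            · have hfx : f x.val = 3 := f3M x.val hxr hMx hRx
              rw [hfx] at hz'
              rcases hz' with hq | hq | ⟨hq, _⟩
              · exact ⟨x, hrefl x.val, show f x.val = z by rw [hfx, hq]⟩
              · exact absurd hq (by decide)
              · exact absurd hq (by decide)
          · by_cases hx1 : ∃ m, ((∀ z, R m z → z = m) ∧
                Relation.ReflTransGen (StepRel R) m0 m) ∧ R x.val m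
            · have hfx : f x.val = 1 := f1 x.val hxr hMx hx1
              rw [hfx] at hz'
              rcases hz' with hq | hq | ⟨_, hq⟩
              · exact ⟨x, hrefl x.val, show f x.val = z by rw [hfx, hq]⟩
              · exact absurd hq (by decide)
              · obtain ⟨m, ⟨hMm, hRm⟩, hxm⟩ := hx1
                have hmr : m ≠ r := fun h => hMr (h ▸ hMm)
                exact ⟨⟨m, trivial⟩, hxm, show f m = z by rw [f0 m hmr hMm hRm, hq]⟩
            · have hfx : f x.val = 3 := f3m x.val hxr hMx hx1
              rw [hfx] at hz'
              rcases hz' with hq | hq | ⟨hq, _⟩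
              · exact ⟨x, hrefl x.val, show f x.val = z by rw [hfx, hq]⟩
              · exact absurd hq (by decide)
              · exact absurd hq (by decide)
      -- build the closed tour
      have hloop : ∀ x : W, ∃ L, ChainFrom R m0 L m0 ∧
          (x = r ∨ x ∈ m0 :: L.map Prod.snd ∨ x ∈ L.map Prod.fst) := by
        intro x
        by_cases hxr : x = r
        · exact ⟨[], rfl, Or.inl hxr⟩
        by_cases hMx : ∀ z, R x z → z = x
        · obtain ⟨L1, hL1, hmem⟩ := reach_to_chain (hconn x hMx)
          obtain ⟨L2, hL2, _⟩ := reach_to_chain (hsymm (hconn x hMx))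
          refine ⟨L1 ++ L2, chain_append _ _ _ _ _ hL1 hL2, Or.inr (Or.inl ?_)⟩
          rcases List.mem_cons.1 hmem with h | h
          · exact List.mem_cons.2 (Or.inl h)
          · refine List.mem_cons.2 (Or.inr ?_)
            rw [List.map_append]
            exact List.mem_append.2 (Or.inl h)
        · have hABx := hAB x ⟨hxr, hMx⟩
          obtain ⟨hMa, hMb, hxa, hxb, hstr⟩ := hABx
          obtain ⟨L1, hL1, _⟩ := reach_to_chain (hconn (A x) hMa)
          obtain ⟨L2, hL2, _⟩ := reach_to_chain (hsymm (hconn (B x) hMb))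
          refine ⟨L1 ++ ((x, B x) :: L2), chain_append _ _ _ _ _ hL1
            ⟨hxa, hxb, hstr, hMb, hL2⟩, Or.inr (Or.inr ?_)⟩
          rw [List.map_append]
          exact List.mem_append.2 (Or.inr (by simp))
      choose Lx hLx1 hLx2 using hloop
      obtain ⟨l, hl⟩ : ∃ l : List W, ∀ x : W, x ∈ l := by
        letI := Fintype.ofFinite W
        exact ⟨Finset.univ.toList, fun x => by simp⟩
      set T : List (W × W) := Lx i0 ++ (l.map Lx).flatten with hT
      have hchainT : ChainFrom R m0 T m0 :=
        chain_append _ _ _ _ _ (hLx1 i0) (chain_flatten _ (fun L hL => by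
          obtain ⟨x, _, rfl⟩ := List.mem_map.1 hL
          exact hLx1 x))
      have hTne : T ≠ [] := by
        rcases hLx2 i0 with h | h | h
        · exact absurd h hi0r
        · exfalso
          rcases List.mem_cons.1 h with h' | h'
          · exact hi0M (h' ▸ hMm0)
          · obtain ⟨p, hp, hpe⟩ := List.mem_map.1 h'
            exact hi0M (hpe ▸ chain_snd_max _ _ _ (hLx1 i0) p hp)
        · intro hTnil
          rw [hT] at hTnil
          have h0 : Lx i0 = [] := (List.append_eq_nil_iff.1 hTnil).1
          rw [h0] at h
          simp at h
      have hcovT : ∀ u, u = r ∨ u ∈ m0 :: T.map Prod.snd ∨ u ∈ T.map Prod.fst := by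
        intro u
        rcases hLx2 u with h | h | h
        · exact Or.inl h
        · right; left
          rcases List.mem_cons.1 h with h' | h'
          · exact List.mem_cons.2 (Or.inl h')
          · refine List.mem_cons.2 (Or.inr ?_)
            obtain ⟨p, hp, hpe⟩ := List.mem_map.1 h'
            refine List.mem_map.2 ⟨p, ?_, hpe⟩
            rw [hT, List.mem_append]
            right
            rw [List.mem_flatten]
            exact ⟨Lx u, List.mem_map.2 ⟨u, hl u, rfl⟩, hp⟩
        · right; right
          obtain ⟨p, hp, hpe⟩ := List.mem_map.1 h
          refine List.mem_map.2 ⟨p, ?_, hpe⟩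
          rw [hT, List.mem_append]
          right
          rw [List.mem_flatten]
          exact ⟨Lx u, List.mem_map.2 ⟨u, hl u, rfl⟩, hp⟩
      exact crown_of_tour hrefl r m0 hr T hTne hchainT hMm0 hcovT
end

section
/- For every n ≥ 1, the crown frame 𝔠_n validates both axioms (I) and (II): under every valuation assigning arbitrary subsets of S_n to the propositional letters, the formulas (I) and (II) are true at every world of 𝔠_n under Kripke semantics. -/
/-- The Boolean subalgebra of the powerset of `X` generated by a family `G` of subsets. -/
inductive BoolGen {X : Type*} (G : Set (Set X)) : Set X → Prop
  | base (A : Set X) : A ∈ G → BoolGen G A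
  | empty : BoolGen G ∅
  | univ : BoolGen G Set.univ
  | union (A B : Set X) : BoolGen G A → BoolGen G B → BoolGen G (A ∪ B)
  | inter (A B : Set X) : BoolGen G A → BoolGen G B → BoolGen G (A ∩ B)
  | compl (A : Set X) : BoolGen G A → BoolGen G Aᶜ

/-- The closed half-spaces `{x ∈ ℝⁿ : ℓ(x) ≤ a}`. -/
def halfSpaces (n : ℕ) : Set (Set (EuclideanSpace ℝ (Fin n))) :=
  {H | ∃ (l : EuclideanSpace ℝ (Fin n) →ₗ[ℝ] ℝ) (a : ℝ), H = {x | l x ≤ a}}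

/-- Modal formulas over countably many propositional letters, built from
`⊥`, `¬`, `∨` and `◇`. -/
inductive Fml : Type
  | bot : Fml
  | var : ℕ → Fml
  | neg : Fml → Fml
  | or : Fml → Fml → Fml
  | dia : Fml → Fml

/-- Topological semantics: the set of points at which a formula is true,
with `◇` interpreted as topological closure. -/
def topoSem {X : Type*} [TopologicalSpace X] (ν : ℕ → Set X) : Fml → Set X
  | .bot => ∅
  | .var p => ν p
  | .neg φ => (topoSem ν φ)ᶜ
  | .or φ ψ => topoSem ν φ ∪ topoSem ν ψ
  | .dia φ => closure (topoSem ν φ)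

/-- Kripke semantics: the set of worlds of the frame `(W, R)` at which a formula is true. -/
def kripkeSem {W : Type*} (R : W → W → Prop) (ν : ℕ → Set W) : Fml → Set W
  | .bot => ∅
  | .var p => ν p
  | .neg φ => (kripkeSem R ν φ)ᶜ
  | .or φ ψ => kripkeSem R ν φ ∪ kripkeSem R ν ψ
  | .dia φ => {w | ∃ v, R w v ∧ v ∈ kripkeSem R ν φ}

/-- Defined connectives: `φ ∧ ψ`, `φ → ψ`, `□φ := ¬◇¬φ`. -/
def Fml.and (φ ψ : Fml) : Fml := .neg (.or (.neg φ) (.neg ψ))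
def Fml.imp (φ ψ : Fml) : Fml := .or (.neg φ) ψ
def Fml.box (φ : Fml) : Fml := .neg (.dia (.neg φ))

/-- The axiom (I) `p → □(¬p → □(p → □p))`, with `p` the letter `0`. -/
def axiomI : Fml :=
  (Fml.var 0).imp (Fml.box (((Fml.var 0).neg).imp (Fml.box ((Fml.var 0).imp (Fml.box (Fml.var 0))))))

/-- The formula `γ = ◇□(p∧q) ∧ ◇□(¬p∧q) ∧ ◇□(p∧¬q)`, with `p,q` the letters `0,1`. -/
def gammaFml : Fml :=
  (Fml.dia (Fml.box ((Fml.var 0).and (Fml.var 1)))).and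
    ((Fml.dia (Fml.box (((Fml.var 0).neg).and (Fml.var 1)))).and
      (Fml.dia (Fml.box ((Fml.var 0).and ((Fml.var 1).neg)))))

/-- The axiom (II) `□((r∧q) → γ) → ((r∧q) → ◇(¬(r∧q) ∧ ◇□p ∧ ◇□¬p))`,
with `p,q,r` the letters `0,1,2`. -/
def axiomII : Fml :=
  (Fml.box (((Fml.var 2).and (Fml.var 1)).imp gammaFml)).imp
    (((Fml.var 2).and (Fml.var 1)).imp
      (Fml.dia ((((Fml.var 2).and (Fml.var 1)).neg).and
        ((Fml.dia (Fml.box (Fml.var 0))).and (Fml.dia (Fml.box ((Fml.var 0).neg)))))))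

section CrownAux

variable {n : ℕ}

lemma crown_refl (n : ℕ) (x : Fin (2*n+1)) : crownRel n x x := Or.inl rfl

lemma crown_root {x y : Fin (2*n+1)} (h : x.val = 0) : crownRel n x y := Or.inr (Or.inl h)

lemma crown_odd {x y : Fin (2*n+1)} (hx : x.val % 2 = 1) (h : crownRel n x y) : y = x := by
  rcases h with h | h | ⟨h, -, -⟩
  · exact h.symm
  · omega
  · omega

lemma crown_to_root {x y : Fin (2*n+1)} (h : crownRel n x y) (hy : y.val = 0) : x.val = 0 := by
  rcases h with h | h | ⟨he, hne, h3⟩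
  · rw [h]; exact hy
  · exact h
  · omega

lemma crown_even {x y : Fin (2*n+1)} (hx : x.val % 2 = 0) (hne : x.val ≠ 0)
    (h : crownRel n x y) :
    y = x ∨ (y.val + 1 = x.val ∨ y.val = x.val + 1 ∨ (x.val = 2*n ∧ y.val = 1)) := by
  rcases h with h | h | ⟨-, -, h3⟩
  · exact Or.inl h.symm
  · exact absurd h hne
  · exact Or.inr h3

/-- No world other than the root satisfies γ. -/
lemma no_gamma (n : ℕ) (μ : ℕ → Set (Fin (2*n+1))) (v : Fin (2*n+1)) (hv : v.val ≠ 0)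
    (hA : ∃ a, crownRel n v a ∧ ∀ t, crownRel n a t → t ∈ μ 0 ∧ t ∈ μ 1)
    (hB : ∃ b, crownRel n v b ∧ ∀ t, crownRel n b t → t ∉ μ 0 ∧ t ∈ μ 1)
    (hC : ∃ c, crownRel n v c ∧ ∀ t, crownRel n c t → t ∈ μ 0 ∧ t ∉ μ 1) : False := by
  obtain ⟨a, hva, ha⟩ := hA
  obtain ⟨b, hvb, hb⟩ := hB
  obtain ⟨c, hvc, hc⟩ := hC
  have hAa := ha a (crown_refl n a)
  have hBb := hb b (crown_refl n b)
  have hCc := hc c (crown_refl n c)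
  by_cases hpar : v.val % 2 = 1
  · have e1 := crown_odd hpar hva
    have e2 := crown_odd hpar hvb
    have : b = a := e2.trans e1.symm
    exact hBb.1 (this ▸ hAa.1)
  · have hpar0 : v.val % 2 = 0 := by omega
    have hav : a ≠ v := by rintro rfl; exact hBb.1 (ha b hvb).1
    have hbv : b ≠ v := by rintro rfl; exact (hb a hva).1 hAa.1
    have hcv : c ≠ v := by rintro rfl; exact (hc b hvb).2 hBb.2
    have pa := (crown_even hpar0 hv hva).resolve_left hav
    have pb := (crown_even hpar0 hv hvb).resolve_left hbv
    have pc := (crown_even hpar0 hv hvc).resolve_left hcv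
    have hab : a.val ≠ b.val := fun h => hBb.1 ((Fin.ext h : a = b) ▸ hAa.1)
    have hac : a.val ≠ c.val := fun h => hCc.2 ((Fin.ext h : a = c) ▸ hAa.2)
    have hbc : b.val ≠ c.val := fun h => hBb.1 ((Fin.ext h.symm : c = b) ▸ hCc.1)
    have h1 := a.isLt
    have h2 := b.isLt
    have h3 := c.isLt
    have h4 := v.isLt
    omega

/-- From a non-root world all of whose successors satisfy `P`, extract an odd world in `P`. -/
lemma exists_odd_in {P : Fin (2*n+1) → Prop} {a : Fin (2*n+1)} (h0 : a.val ≠ 0)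
    (ha : ∀ t, crownRel n a t → P t) :
    ∃ x : Fin (2*n+1), x.val % 2 = 1 ∧ P x := by
  by_cases hodd : a.val % 2 = 1
  · exact ⟨a, hodd, ha a (crown_refl n a)⟩
  · have he : a.val % 2 = 0 := by omega
    have hlt : a.val - 1 < 2*n+1 := by have := a.isLt; omega
    refine ⟨⟨a.val - 1, hlt⟩, by show (a.val - 1) % 2 = 1; omega, ha _ ?_⟩
    exact Or.inr (Or.inr ⟨he, h0, Or.inl (by show a.val - 1 + 1 = a.val; omega)⟩)

/-- A non-constant predicate on a cycle has a flip between consecutive points. -/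
lemma exists_flip (d : ℕ → Prop) (m i j : ℕ) (hi : i < m) (hj : j < m)
    (hdi : d i) (hdj : ¬ d j) :
    ∃ k, k + 1 < m ∧ ((d k ∧ ¬ d (k+1)) ∨ (¬ d k ∧ d (k+1))) := by
  by_contra h
  push_neg at h
  have key : ∀ p, p < m → (d p ↔ d 0) := by
    intro p
    induction p with
    | zero => exact fun _ => Iff.rfl
    | succ p ih =>
      intro hp
      have h1 := ih (by omega)
      have h2 := h p hp
      constructor <;> intro hx <;> tauto
  exact hdj ((key j hj).mpr ((key i hi).mp hdi))

end CrownAux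

/-- Every crown frame validates both axioms (I) and (II) under Kripke semantics. -/
theorem crown_validates_axioms (n : ℕ) (hn : 1 ≤ n)
    (μ : ℕ → Set (Fin (2 * n + 1))) (w : Fin (2 * n + 1)) :
    w ∈ kripkeSem (crownRel n) μ axiomI ∧ w ∈ kripkeSem (crownRel n) μ axiomII := by
  constructor
  · -- Axiom (I)
    simp only [axiomI, Fml.imp, Fml.box, kripkeSem, Set.mem_union, Set.mem_compl_iff,
      Set.mem_setOf_eq, not_exists, not_and, not_not]
    by_cases hwP : w ∈ μ 0
    · right
      intro v hwv
      by_cases hvP : v ∈ μ 0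
      · exact Or.inl hvP
      · right
        intro u hvu
        by_cases huP : u ∈ μ 0
        · right
          intro t hut
          by_cases hupar : u.val % 2 = 1
          · rw [crown_odd hupar hut]; exact huP
          · by_cases hu0 : u.val = 0
            · have hv0 : v.val = 0 := crown_to_root hvu hu0
              have hw0 : w.val = 0 := crown_to_root hwv hv0
              exact absurd ((Fin.ext (hw0.trans hv0.symm) : w = v) ▸ hwP) hvP
            · rcases hvu with h | h | ⟨hve, -, h3⟩
              · subst h; exact absurd huP hvP
              · have hw0 : w.val = 0 := crown_to_root hwv h
                exact absurd ((Fin.ext (hw0.trans h.symm) : w = v) ▸ hwP) hvP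
              · omega
        · exact Or.inl huP
    · exact Or.inl hwP
  · -- Axiom (II)
    simp only [axiomII, Fml.imp, Fml.box, Fml.and, gammaFml, kripkeSem, Set.mem_union,
      Set.mem_compl_iff, Set.mem_setOf_eq, not_exists, not_and, not_not, not_or]
    push_neg
    by_cases hw : w ∈ μ 2 ∧ w ∈ μ 1
    case neg => exact Or.inr (Or.inl fun h2 h1 => hw ⟨h2, h1⟩)
    case pos =>
    by_cases Hbox : ∀ x, crownRel n w x → x ∈ μ 2 → x ∈ μ 1 →
        ((∃ a, crownRel n x a ∧ ∀ t, crownRel n a t → t ∈ μ 0 ∧ t ∈ μ 1) ∧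
         (∃ b, crownRel n x b ∧ ∀ t, crownRel n b t → t ∉ μ 0 ∧ t ∈ μ 1) ∧
         (∃ c, crownRel n x c ∧ ∀ t, crownRel n c t → t ∈ μ 0 ∧ t ∉ μ 1))
    case neg =>
      push_neg at Hbox
      obtain ⟨x, hwx, h2, h1, hng⟩ := Hbox
      left
      exact ⟨x, hwx, ⟨h2, h1⟩, hng⟩
    case pos =>
      obtain ⟨hw2, hw1⟩ := hw
      have hw0 : w.val = 0 := by
        by_contra hw0
        obtain ⟨hA, hB, hC⟩ := Hbox w (crown_refl n w) hw2 hw1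
        exact no_gamma n μ w hw0 hA hB hC
      obtain ⟨⟨a, hwa, ha⟩, ⟨b, hwb, hb⟩, -⟩ := Hbox w (crown_refl n w) hw2 hw1
      have ha0 : a.val ≠ 0 := by
        intro h
        exact (hb b (crown_refl n b)).1 (ha b (crown_root h)).1
      have hb0 : b.val ≠ 0 := by
        intro h
        exact (hb a (crown_root h)).1 (ha a (crown_refl n a)).1
      obtain ⟨x, hxodd, hxP⟩ := exists_odd_in ha0 (fun t ht => (ha t ht).1)
      obtain ⟨y, hyodd, hyP⟩ :=
        exists_odd_in (P := fun t => t ∉ μ 0) hb0 (fun t ht => (hb t ht).1)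
      have hxlt : (x.val - 1)/2 < n := by have := x.isLt; omega
      have hylt : (y.val - 1)/2 < n := by have := y.isLt; omega
      have hxd : ∀ h : 2*((x.val - 1)/2)+1 < 2*n+1,
          (⟨2*((x.val - 1)/2)+1, h⟩ : Fin (2*n+1)) ∈ μ 0 := by
        intro h
        have heq : (⟨2*((x.val - 1)/2)+1, h⟩ : Fin (2*n+1)) = x :=
          Fin.ext (by show 2*((x.val - 1)/2)+1 = x.val; omega)
        rw [heq]; exact hxP
      have hyd : ¬ ∀ h : 2*((y.val - 1)/2)+1 < 2*n+1,
          (⟨2*((y.val - 1)/2)+1, h⟩ : Fin (2*n+1)) ∈ μ 0 := by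
        intro h
        have hlt : 2*((y.val - 1)/2)+1 < 2*n+1 := by have := y.isLt; omega
        have heq : (⟨2*((y.val - 1)/2)+1, hlt⟩ : Fin (2*n+1)) = y :=
          Fin.ext (by show 2*((y.val - 1)/2)+1 = y.val; omega)
        exact hyP (heq ▸ h hlt)
      obtain ⟨k, hk, hflip⟩ := exists_flip
        (fun i => ∀ h : 2*i+1 < 2*n+1, (⟨2*i+1, h⟩ : Fin (2*n+1)) ∈ μ 0)
        n ((x.val - 1)/2) ((y.val - 1)/2) hxlt hylt hxd hyd
      have hl1 : 2*k+1 < 2*n+1 := by omega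
      have hl2 : 2*(k+1)+1 < 2*n+1 := by omega
      have hlv : 2*k+2 < 2*n+1 := by omega
      set o1 : Fin (2*n+1) := ⟨2*k+1, hl1⟩ with ho1
      set o2 : Fin (2*n+1) := ⟨2*(k+1)+1, hl2⟩ with ho2
      set v : Fin (2*n+1) := ⟨2*k+2, hlv⟩ with hv
      have hrv1 : crownRel n v o1 :=
        Or.inr (Or.inr ⟨by show (2*k+2) % 2 = 0; omega, by show 2*k+2 ≠ 0; omega,
          Or.inl (by show 2*k+1+1 = 2*k+2; omega)⟩)
      have hrv2 : crownRel n v o2 :=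
        Or.inr (Or.inr ⟨by show (2*k+2) % 2 = 0; omega, by show 2*k+2 ≠ 0; omega,
          Or.inr (Or.inl (by show 2*(k+1)+1 = 2*k+2+1; omega))⟩)
      have hbox1 : ∀ t, crownRel n o1 t → t = o1 :=
        fun t ht => crown_odd (by show (2*k+1) % 2 = 1; omega) ht
      have hbox2 : ∀ t, crownRel n o2 t → t = o2 :=
        fun t ht => crown_odd (by show (2*(k+1)+1) % 2 = 1; omega) ht
      right; right
      refine ⟨v, crown_root hw0, ?_, ?_, ?_⟩
      · intro h2 h1
        obtain ⟨hA, hB, hC⟩ := Hbox v (crown_root hw0) h2 h1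
        exact no_gamma n μ v (by show 2*k+2 ≠ 0; omega) hA hB hC
      · rcases hflip with ⟨hdk, hndk⟩ | ⟨hndk, hdk⟩
        · exact ⟨o1, hrv1, fun t ht => by rw [hbox1 t ht]; exact hdk hl1⟩
        · exact ⟨o2, hrv2, fun t ht => by rw [hbox2 t ht]; exact hdk hl2⟩
      · rcases hflip with ⟨hdk, hndk⟩ | ⟨hndk, hdk⟩
        · exact ⟨o2, hrv2, fun t ht hm => hndk (fun _ => by rw [hbox2 t ht] at hm; exact hm)⟩
        · exact ⟨o1, hrv1, fun t ht hm => hndk (fun _ => by rw [hbox1 t ht] at hm; exact hm)⟩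
end

section
/- For a subset B of ℝ², let δB denote the external boundary of B, namely δB = cl(B) \ B, where cl is the closure in the Euclidean topology. Then for every polygon A ∈ P₂, applying δ three times yields the empty set: δ(δ(δ(A))) = ∅. -/
/-- The external boundary `δB = cl(B) \ B` of a subset of the plane. -/
def extBoundary (B : Set (EuclideanSpace ℝ (Fin 2))) : Set (EuclideanSpace ℝ (Fin 2)) :=
  closure B \ B

open Set Topology

noncomputable section

abbrev E2 := EuclideanSpace ℝ (Fin 2)

/-- Finite unions of sets satisfying `P`. -/
def FU (P : Set E2 → Prop) (A : Set E2) : Prop :=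
  ∃ (ι : Type) (_ : Finite ι) (f : ι → Set E2), (∀ i, P (f i)) ∧ A = ⋃ i, f i

theorem FU.single {P : Set E2 → Prop} {A : Set E2} (h : P A) : FU P A :=
  ⟨PUnit, inferInstance, fun _ => A, fun _ => h, (Set.iUnion_const A).symm⟩

theorem FU.empty {P : Set E2 → Prop} : FU P ∅ :=
  ⟨PEmpty, inferInstance, fun i => i.elim, fun i => i.elim, by simp⟩

theorem FU.mono {P Q : Set E2 → Prop} {A : Set E2} (h : ∀ s, P s → Q s) (hA : FU P A) :
    FU Q A := by
  obtain ⟨ι, hι, f, hf, rfl⟩ := hA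
  exact ⟨ι, hι, f, fun i => h _ (hf i), rfl⟩

theorem FU.union {P : Set E2 → Prop} {A B : Set E2} (hA : FU P A) (hB : FU P B) :
    FU P (A ∪ B) := by
  obtain ⟨ι, hι, f, hf, rfl⟩ := hA
  obtain ⟨κ, hκ, g, hg, rfl⟩ := hB
  haveI := hι; haveI := hκ
  refine ⟨ι ⊕ κ, inferInstance, Sum.elim f g, ?_, ?_⟩
  · rintro (i | j) <;> simp [hf, hg]
  · ext x; simp

theorem FU.inter {P : Set E2 → Prop} {A B : Set E2}
    (hP : ∀ s t, P s → P t → P (s ∩ t)) (hA : FU P A) (hB : FU P B) : FU P (A ∩ B) := by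
  obtain ⟨ι, hι, f, hf, rfl⟩ := hA
  obtain ⟨κ, hκ, g, hg, rfl⟩ := hB
  haveI := hι; haveI := hκ
  refine ⟨ι × κ, inferInstance, fun p => f p.1 ∩ g p.2,
    fun p => hP _ _ (hf p.1) (hg p.2), ?_⟩
  ext x
  simp only [mem_inter_iff, mem_iUnion]
  constructor
  · rintro ⟨⟨i, hi⟩, ⟨j, hj⟩⟩; exact ⟨⟨i, j⟩, hi, hj⟩
  · rintro ⟨⟨i, j⟩, hi, hj⟩; exact ⟨⟨i, hi⟩, ⟨j, hj⟩⟩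

theorem FU.iUnion {P : Set E2 → Prop} {ι : Type} [Finite ι] {g : ι → Set E2}
    (h : ∀ i, FU P (g i)) : FU P (⋃ i, g i) := by
  choose κ hκ f hf hfg using h
  haveI := hκ
  refine ⟨Σ i, κ i, inferInstance, fun p => f p.1 p.2, fun p => hf p.1 p.2, ?_⟩
  ext x
  simp only [mem_iUnion, Sigma.exists]
  constructor
  · rintro ⟨i, hi⟩
    rw [hfg i] at hi
    obtain ⟨j, hj⟩ := mem_iUnion.1 hi
    exact ⟨i, j, hj⟩
  · rintro ⟨i, j, hj⟩
    exact ⟨i, by rw [hfg i]; exact mem_iUnion.2 ⟨j, hj⟩⟩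

theorem FU.iInterFin {P : Set E2 → Prop} (hP : ∀ s t, P s → P t → P (s ∩ t))
    (hU : FU P univ) :
    ∀ (n : ℕ) (g : Fin n → Set E2), (∀ i, FU P (g i)) → FU P (⋂ i, g i)
  | 0, g, _ => by simpa using hU
  | (n + 1), g, h => by
      have e : (⋂ i, g i) = g 0 ∩ ⋂ i : Fin n, g i.succ := by
        ext x; simp [mem_iInter, Fin.forall_fin_succ]
      rw [e]
      exact (h 0).inter hP (FU.iInterFin hP hU n (fun i => g i.succ) fun i => h i.succ)

theorem FU.iInter {P : Set E2 → Prop} (hP : ∀ s t, P s → P t → P (s ∩ t))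
    (hU : FU P univ) {ι : Type} [Finite ι] (g : ι → Set E2)
    (h : ∀ i, FU P (g i)) : FU P (⋂ i, g i) := by
  obtain ⟨n, ⟨e⟩⟩ := Finite.exists_equiv_fin ι
  have he : (⋂ i, g i) = ⋂ k : Fin n, g (e.symm k) := by
    ext x
    simp only [mem_iInter]
    exact ⟨fun hx k => hx _, fun hx i => by simpa using hx (e i)⟩
  rw [he]
  exact FU.iInterFin hP hU n _ fun k => h _

/-- Open or closed half-planes. -/
def GHS : Set (Set E2) :=
  {H | ∃ (l : E2 →ₗ[ℝ] ℝ) (a : ℝ), H = {x | l x ≤ a} ∨ H = {x | l x < a}}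

theorem ghs_convex {H : Set E2} (h : H ∈ GHS) : Convex ℝ H := by
  obtain ⟨l, a, rfl | rfl⟩ := h
  · exact convex_halfSpace_le l.isLinear a
  · exact convex_halfSpace_lt l.isLinear a

theorem ghs_compl {H : Set E2} (h : H ∈ GHS) : Hᶜ ∈ GHS := by
  obtain ⟨l, a, rfl | rfl⟩ := h
  · refine ⟨-l, -a, Or.inr ?_⟩
    ext x
    simp only [mem_compl_iff, mem_setOf_eq, not_le, LinearMap.neg_apply]
    constructor <;> intro <;> linarith
  · refine ⟨-l, -a, Or.inl ?_⟩
    ext x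
    simp only [mem_compl_iff, mem_setOf_eq, not_lt, LinearMap.neg_apply]
    constructor <;> intro <;> linarith

/-- Cells: finite intersections of open/closed half-planes. -/
def IsCell (C : Set E2) : Prop :=
  ∃ (ι : Type) (_ : Finite ι) (f : ι → Set E2), (∀ i, f i ∈ GHS) ∧ C = ⋂ i, f i

theorem IsCell.univ : IsCell univ :=
  ⟨PEmpty, inferInstance, fun i => i.elim, fun i => i.elim, by simp⟩

theorem IsCell.ofGHS {H : Set E2} (h : H ∈ GHS) : IsCell H :=
  ⟨PUnit, inferInstance, fun _ => H, fun _ => h, (Set.iInter_const H).symm⟩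

theorem IsCell.inter {C D : Set E2} (hC : IsCell C) (hD : IsCell D) : IsCell (C ∩ D) := by
  obtain ⟨ι, hι, f, hf, rfl⟩ := hC
  obtain ⟨κ, hκ, g, hg, rfl⟩ := hD
  haveI := hι; haveI := hκ
  refine ⟨ι ⊕ κ, inferInstance, Sum.elim f g, ?_, ?_⟩
  · rintro (i | j) <;> simp [hf, hg]
  · ext x; simp

theorem IsCell.convex {C : Set E2} (hC : IsCell C) : Convex ℝ C := by
  obtain ⟨ι, hι, f, hf, rfl⟩ := hC
  exact convex_iInter fun i => ghs_convex (hf i)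

theorem IsCell.compl_FU {C : Set E2} (hC : IsCell C) : FU IsCell Cᶜ := by
  obtain ⟨ι, hι, f, hf, rfl⟩ := hC
  haveI := hι
  rw [compl_iInter]
  exact FU.iUnion fun i => FU.single (IsCell.ofGHS (ghs_compl (hf i)))

def lineSet (p v : E2) : Set E2 := {x | ∃ t : ℝ, x = p + t • v}

def lineMap' (p v : E2) : ℝ →ᵃ[ℝ] E2 := AffineMap.lineMap p (p + v)

theorem lineMap'_apply (p v : E2) (t : ℝ) : lineMap' p v t = p + t • v := by
  simp [lineMap', AffineMap.lineMap_apply]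
  module

theorem lineSet_eq_range (p v : E2) : lineSet p v = Set.range (lineMap' p v) := by
  ext x
  simp only [lineSet, mem_setOf_eq, mem_range]
  constructor
  · rintro ⟨t, rfl⟩; exact ⟨t, lineMap'_apply p v t⟩
  · rintro ⟨t, rfl⟩; exact ⟨t, lineMap'_apply p v t⟩

theorem lineSet_convex (p v : E2) : Convex ℝ (lineSet p v) := by
  rw [lineSet_eq_range, ← image_univ]
  exact convex_univ.affine_image _

theorem lineMap'_injective (p v : E2) (hv : v ≠ 0) : Function.Injective (lineMap' p v) := by
  intro s t h
  rw [lineMap'_apply, lineMap'_apply] at h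
  have : s • v = t • v := by
    have := add_left_cancel h
    exact this
  exact smul_left_injective ℝ hv this

/-- frontier of a half-plane with nonzero functional lies on a line. -/
theorem halfplane_frontier_line (l : E2 →ₗ[ℝ] ℝ) (a : ℝ) (hl : l ≠ 0) :
    ∃ p v : E2, v ≠ 0 ∧ frontier {x | l x ≤ a} ⊆ lineSet p v := by
  have hc : Continuous l := l.continuous_of_finiteDimensional
  obtain ⟨z, hz⟩ : ∃ z, l z ≠ 0 := by
    by_contra h
    push_neg at h
    exact hl (by ext x; simp [h x])
  set p : E2 := (a / l z) • z with hp
  have hlp : l p = a := by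
    simp [hp, map_smul]
    field_simp
  -- kernel has a nonzero vector
  have hker : LinearMap.ker l ≠ ⊥ := by
    intro h
    have hinj : Function.Injective l := LinearMap.ker_eq_bot.mp h
    have h2 : Module.finrank ℝ E2 ≤ Module.finrank ℝ ℝ :=
      LinearMap.finrank_le_finrank_of_injective hinj
    rw [finrank_euclideanSpace_fin, Module.finrank_self] at h2
    omega
  obtain ⟨v, hvker, hv⟩ := Submodule.ne_bot_iff _ |>.mp hker
  refine ⟨p, v, hv, ?_⟩
  -- frontier ⊆ {l = a}
  have hfr : frontier {x | l x ≤ a} ⊆ {x | l x = a} :=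
    frontier_le_subset_eq hc continuous_const
  -- ker l = span v
  have hrange : LinearMap.range l = ⊤ := by
    rw [LinearMap.range_eq_top]
    intro c
    exact ⟨(c / l z) • z, by simp [map_smul]; field_simp⟩
  have hk1 : Module.finrank ℝ (LinearMap.ker l) = 1 := by
    have h3 := LinearMap.finrank_range_add_finrank_ker l
    rw [hrange, finrank_top, finrank_euclideanSpace_fin, Module.finrank_self] at h3
    omega
  have hspan : Submodule.span ℝ {v} = LinearMap.ker l := by
    apply Submodule.eq_of_le_of_finrank_eq
    · rw [Submodule.span_le, singleton_subset_iff]; exact hvker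
    · rw [finrank_span_singleton hv, hk1]
  intro x hx
  have hxa : l x = a := hfr hx
  have hxker : x - p ∈ LinearMap.ker l := by
    simp [LinearMap.mem_ker, map_sub, hxa, hlp]
  rw [← hspan, Submodule.mem_span_singleton] at hxker
  obtain ⟨t, ht⟩ := hxker
  exact ⟨t, by rw [ht]; abel⟩

theorem frontier_union_sub {s t : Set E2} :
    frontier (s ∪ t) ⊆ frontier s ∪ frontier t := by
  intro x hx
  obtain ⟨hxc, hxi⟩ := hx
  rw [closure_union] at hxc
  rcases hxc with h | h
  · by_cases hi : x ∈ interior s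
    · exact absurd (interior_mono subset_union_left hi) hxi
    · exact Or.inl ⟨h, hi⟩
  · by_cases hi : x ∈ interior t
    · exact absurd (interior_mono subset_union_right hi) hxi
    · exact Or.inr ⟨h, hi⟩

theorem frontier_inter_sub {s t : Set E2} :
    frontier (s ∩ t) ⊆ frontier s ∪ frontier t := by
  intro x hx
  obtain ⟨hxc, hxi⟩ := hx
  rw [interior_inter] at hxi
  have hcs : x ∈ closure s := closure_mono inter_subset_left hxc
  have hct : x ∈ closure t := closure_mono inter_subset_right hxc
  by_cases hi : x ∈ interior s
  · exact Or.inr ⟨hct, fun h => hxi ⟨hi, h⟩⟩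
  · exact Or.inl ⟨hcs, hi⟩

/-- complement of a convex set in ℝ is union of two convex sets -/
theorem real_compl_convex {S : Set ℝ} (hS : Convex ℝ S) :
    ∃ P Q : Set ℝ, Convex ℝ P ∧ Convex ℝ Q ∧ Sᶜ = P ∪ Q := by
  refine ⟨{t | ∀ s ∈ S, t < s}, {t | ∀ s ∈ S, s < t}, ?_, ?_, ?_⟩
  · rw [convex_iff_ordConnected]
    constructor
    intro x _ y hy z hz s hs
    exact lt_of_le_of_lt hz.2 (hy s hs)
  · rw [convex_iff_ordConnected]
    constructor
    intro x hx y _ z hz s hs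
    exact lt_of_lt_of_le (hx s hs) hz.1
  · have hord := hS.ordConnected
    ext t
    simp only [mem_compl_iff, mem_union, mem_setOf_eq]
    constructor
    · intro ht
      by_cases hlow : ∀ s ∈ S, t < s
      · exact Or.inl hlow
      · push_neg at hlow
        obtain ⟨s1, hs1, hs1t⟩ := hlow
        refine Or.inr fun s hs => ?_
        by_contra hc
        push_neg at hc
        exact ht (hord.out hs1 hs ⟨hs1t, hc⟩)
    · rintro (h | h) ht
      · exact lt_irrefl t (h t ht)
      · exact lt_irrefl t (h t ht)

/-- a convex subset of ℝ misses at most two points of its closure -/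
theorem real_convex_closure_diff {T : Set ℝ} (hT : Convex ℝ T) : (closure T \ T).Finite := by
  have hsub : closure T \ T ⊆ {sInf T, sSup T} := by
    rintro x ⟨hxc, hxn⟩
    have hne : T.Nonempty := by
      rcases T.eq_empty_or_nonempty with rfl | h
      · simp at hxc
      · exact h
    have hord := hT.ordConnected
    by_cases hlb : ∀ s ∈ T, x ≤ s
    · left
      have h1 : x ≤ sInf T := le_csInf hne hlb
      have h2 : sInf T ≤ x := by
        have : closure T ⊆ Ici (sInf T) :=
          closure_minimal (fun s hs => csInf_le ⟨x, hlb⟩ hs) isClosed_Ici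
        exact this hxc
      exact le_antisymm h1 h2
    · push_neg at hlb
      obtain ⟨s1, hs1, hs1x⟩ := hlb
      have hub : ∀ s ∈ T, s ≤ x := by
        intro s hs
        by_contra hc
        push_neg at hc
        exact hxn (hord.out hs1 hs ⟨le_of_lt hs1x, le_of_lt hc⟩)
      right
      have h1 : sSup T ≤ x := csSup_le hne hub
      have h2 : x ≤ sSup T := by
        have : closure T ⊆ Iic (sSup T) :=
          closure_minimal (fun s hs => le_csSup ⟨x, hub⟩ hs) isClosed_Iic
        exact this hxc
      exact le_antisymm h2 h1
  exact ((Set.finite_singleton (sSup T)).insert (sInf T)).subset hsub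

/-- splitting: points of a line outside a convex set form a union of two convex sets in the line -/
theorem line_diff_convex (p v : E2) {C : Set E2} (hC : Convex ℝ C) :
    ∃ P Q : Set E2, (Convex ℝ P ∧ P ⊆ lineSet p v) ∧ (Convex ℝ Q ∧ Q ⊆ lineSet p v) ∧
      lineSet p v \ C = P ∪ Q := by
  set φ := lineMap' p v with hφ
  have hS : Convex ℝ (φ ⁻¹' C) := hC.affine_preimage φ
  obtain ⟨P0, Q0, hP0, hQ0, hPQ⟩ := real_compl_convex hS
  refine ⟨φ '' P0, φ '' Q0, ⟨hP0.affine_image φ, ?_⟩, ⟨hQ0.affine_image φ, ?_⟩, ?_⟩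
  · rw [lineSet_eq_range]; exact image_subset_range _ _
  · rw [lineSet_eq_range]; exact image_subset_range _ _
  · rw [lineSet_eq_range, ← image_union, ← hPQ, Set.image_compl_preimage]

/-- a convex set inside a line misses only finitely many points of its closure -/
theorem convex_on_line_closure_diff {G : Set E2} {p v : E2} (hv : v ≠ 0)
    (hG : Convex ℝ G) (hsub : G ⊆ lineSet p v) : (closure G \ G).Finite := by
  set φ := lineMap' p v with hφ
  have hinj : Function.Injective φ := lineMap'_injective p v hv
  have hce : IsClosedEmbedding φ := by
    have h1 : IsClosedEmbedding (LinearMap.toSpanSingleton ℝ E2 v) :=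
      LinearMap.isClosedEmbedding_of_injective (by
        rw [LinearMap.ker_eq_bot]
        intro s t hst
        exact smul_left_injective ℝ hv hst)
    have h2 : IsClosedEmbedding (fun x : E2 => p + x) := (Homeomorph.addLeft p).isClosedEmbedding
    have : ⇑φ = (fun x : E2 => p + x) ∘ (LinearMap.toSpanSingleton ℝ E2 v) := by
      funext t
      exact lineMap'_apply p v t
    rw [this]
    exact h2.comp h1
  have hGr : G ⊆ Set.range φ := by rw [← lineSet_eq_range]; exact hsub
  set T := φ ⁻¹' G with hT
  have hGT : G = φ '' T := (Set.image_preimage_eq_of_subset hGr).symm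
  have hTconv : Convex ℝ T := hG.affine_preimage φ
  have hclG : closure G = φ '' closure T := by
    rw [hGT, hce.closure_image_eq]
  have hdiff : closure G \ G = φ '' (closure T \ T) := by
    rw [hclG, hGT, ← Set.image_diff hinj]
  rw [hdiff]
  exact (real_convex_closure_diff hTconv).image φ

theorem closure_iUnion_fin {ι : Type} [Finite ι] (s : ι → Set E2) :
    closure (⋃ i, s i) = ⋃ i, closure (s i) :=
  subset_antisymm
    (closure_minimal (iUnion_mono fun _ => subset_closure)
      (isClosed_iUnion_of_finite fun _ => isClosed_closure))
    (iUnion_subset fun i => closure_mono (subset_iUnion s i))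

theorem polygon_FU_cell {A : Set E2} (hA : BoolGen (halfSpaces 2) A) : FU IsCell A := by
  induction hA with
  | base A h =>
      obtain ⟨l, a, rfl⟩ := h
      exact FU.single (IsCell.ofGHS ⟨l, a, Or.inl rfl⟩)
  | empty => exact FU.empty
  | univ => exact FU.single IsCell.univ
  | union A B _ _ ihA ihB => exact ihA.union ihB
  | inter A B _ _ ihA ihB => exact ihA.inter (fun s t hs ht => hs.inter ht) ihB
  | compl A _ ih =>
      obtain ⟨ι, hι, f, hf, rfl⟩ := ih
      haveI := hι
      rw [compl_iUnion]
      exact FU.iInter (fun s t hs ht => hs.inter ht)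
        (FU.single IsCell.univ) _ fun i => (hf i).compl_FU

theorem polygon_frontier_lines {A : Set E2} (hA : BoolGen (halfSpaces 2) A) :
    ∃ (ι : Type) (_ : Finite ι) (p v : ι → E2),
      (∀ i, v i ≠ 0) ∧ frontier A ⊆ ⋃ i, lineSet (p i) (v i) := by
  induction hA with
  | base A h =>
      obtain ⟨l, a, rfl⟩ := h
      by_cases hl : l = 0
      · refine ⟨PEmpty, inferInstance, fun i => i.elim, fun i => i.elim, fun i => i.elim, ?_⟩
        by_cases ha : (0 : ℝ) ≤ a
        · have hset : {x : E2 | l x ≤ a} = univ := by ext x; simp [hl, ha]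
          rw [hset]; simp
        · have hset : {x : E2 | l x ≤ a} = ∅ := by ext x; simp [hl, ha]
          rw [hset]; simp
      · obtain ⟨p, v, hv, hsub⟩ := halfplane_frontier_line l a hl
        exact ⟨PUnit, inferInstance, fun _ => p, fun _ => v, fun _ => hv,
          fun x hx => mem_iUnion.2 ⟨PUnit.unit, hsub hx⟩⟩
  | empty => exact ⟨PEmpty, inferInstance, fun i => i.elim, fun i => i.elim,
      fun i => i.elim, by simp⟩
  | univ => exact ⟨PEmpty, inferInstance, fun i => i.elim, fun i => i.elim,
      fun i => i.elim, by simp⟩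
  | union A B _ _ ihA ihB =>
      obtain ⟨ι, hι, p, v, hv, hsub⟩ := ihA
      obtain ⟨κ, hκ, q, w, hw, hsub'⟩ := ihB
      haveI := hι; haveI := hκ
      refine ⟨ι ⊕ κ, inferInstance, Sum.elim p q, Sum.elim v w, ?_, ?_⟩
      · rintro (i | j) <;> simp [hv, hw]
      · refine frontier_union_sub.trans ?_
        intro x hx
        rcases hx with h | h
        · obtain ⟨_, ⟨i, rfl⟩, hm⟩ := hsub h
          exact mem_iUnion.2 ⟨Sum.inl i, hm⟩
        · obtain ⟨_, ⟨j, rfl⟩, hm⟩ := hsub' h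
          exact mem_iUnion.2 ⟨Sum.inr j, hm⟩
  | inter A B _ _ ihA ihB =>
      obtain ⟨ι, hι, p, v, hv, hsub⟩ := ihA
      obtain ⟨κ, hκ, q, w, hw, hsub'⟩ := ihB
      haveI := hι; haveI := hκ
      refine ⟨ι ⊕ κ, inferInstance, Sum.elim p q, Sum.elim v w, ?_, ?_⟩
      · rintro (i | j) <;> simp [hv, hw]
      · refine frontier_inter_sub.trans ?_
        intro x hx
        rcases hx with h | h
        · obtain ⟨_, ⟨i, rfl⟩, hm⟩ := hsub h
          exact mem_iUnion.2 ⟨Sum.inl i, hm⟩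
        · obtain ⟨_, ⟨j, rfl⟩, hm⟩ := hsub' h
          exact mem_iUnion.2 ⟨Sum.inr j, hm⟩
  | compl A _ ih =>
      obtain ⟨ι, hι, p, v, hv, hsub⟩ := ih
      exact ⟨ι, hι, p, v, hv, by rwa [frontier_compl]⟩

theorem line_piece {ι : Type} [Finite ι] (C : ι → Set E2) (hconv : ∀ i, Convex ℝ (C i))
    (p v : E2) :
    FU (fun G => Convex ℝ G ∧ G ⊆ lineSet p v) (extBoundary (⋃ i, C i) ∩ lineSet p v) := by
  have hid : extBoundary (⋃ i, C i) ∩ lineSet p v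
      = ⋃ i, ((closure (C i) ∩ lineSet p v) ∩ ⋂ j, (lineSet p v \ C j)) := by
    ext x
    simp only [extBoundary, mem_inter_iff, mem_diff, mem_iUnion, mem_iInter,
      closure_iUnion_fin]
    constructor
    · rintro ⟨⟨hc, hn⟩, hl⟩
      obtain ⟨i, hci⟩ := hc
      exact ⟨i, ⟨hci, hl⟩, fun j => ⟨hl, fun hj => hn ⟨j, hj⟩⟩⟩
    · rintro ⟨i, ⟨hci, hl⟩, hall⟩
      exact ⟨⟨⟨i, hci⟩, fun ⟨j, hj⟩ => (hall j).2 hj⟩, hl⟩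
  rw [hid]
  apply FU.iUnion
  intro i
  have hT : FU (fun G => Convex ℝ G) (⋂ j, lineSet p v \ C j) := by
    apply FU.iInter (fun s t hs ht => hs.inter ht) (FU.single convex_univ)
    intro j
    obtain ⟨P, Q, ⟨hPc, _⟩, ⟨hQc, _⟩, hPQ⟩ := line_diff_convex p v (hconv j)
    rw [hPQ]
    exact (FU.single hPc).union (FU.single hQc)
  obtain ⟨κ, hκ, g, hg, hgeq⟩ := hT
  haveI := hκ
  rw [hgeq, inter_iUnion]
  apply FU.iUnion
  intro j
  exact FU.single ⟨((hconv i).closure.inter (lineSet_convex p v)).inter (hg j),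
    fun x hx => hx.1.2⟩

theorem extBoundary_FU (A : Set E2) (hA : BoolGen (halfSpaces 2) A) :
    FU (fun G => ∃ p v : E2, v ≠ 0 ∧ Convex ℝ G ∧ G ⊆ lineSet p v) (extBoundary A) := by
  obtain ⟨κ, hκ, p, v, hv, hfr⟩ := polygon_frontier_lines hA
  haveI := hκ
  obtain ⟨ι, hι, C, hcell, rfl⟩ := polygon_FU_cell hA
  haveI := hι
  have hsub : extBoundary (⋃ i, C i) ⊆ ⋃ k, lineSet (p k) (v k) := by
    refine subset_trans (fun x hx => ?_) hfr
    exact ⟨hx.1, fun h => hx.2 (interior_subset h)⟩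
  have hEq : extBoundary (⋃ i, C i)
      = ⋃ k, (extBoundary (⋃ i, C i) ∩ lineSet (p k) (v k)) := by
    rw [← inter_iUnion]
    exact (inter_eq_left.mpr hsub).symm
  rw [hEq]
  apply FU.iUnion
  intro k
  exact (line_piece C (fun i => (hcell i).convex) (p k) (v k)).mono
    (fun G hG => ⟨p k, v k, hv k, hG.1, hG.2⟩)


/-- For every polygon `A ∈ P₂`, applying the external boundary operator three times
yields the empty set: `δ³A = ∅`. -/
theorem extBoundary_cubed_eq_empty (A : Set (EuclideanSpace ℝ (Fin 2)))
    (hA : BoolGen (halfSpaces 2) A) :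
    extBoundary (extBoundary (extBoundary A)) = ∅ := by
  obtain ⟨ι, hι, G, hG, hEq⟩ := extBoundary_FU A hA
  haveI := hι
  have hfin : (extBoundary (extBoundary A)).Finite := by
    have hfin2 : (⋃ i, closure (G i) \ G i).Finite := Set.finite_iUnion (fun i => by
      obtain ⟨p, v, hv, hc, hs⟩ := hG i
      exact convex_on_line_closure_diff hv hc hs)
    refine hfin2.subset (fun x hx => ?_)
    obtain ⟨hxc, hxn⟩ := hx
    rw [hEq, closure_iUnion_fin] at hxc
    obtain ⟨i, hxi⟩ := mem_iUnion.1 hxc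
    refine mem_iUnion.2 ⟨i, hxi, fun h => hxn ?_⟩
    rw [hEq]
    exact mem_iUnion.2 ⟨i, h⟩
  have hcl : IsClosed (extBoundary (extBoundary A)) := hfin.isClosed
  rw [extBoundary, hcl.closure_eq]
  exact Set.diff_self

end
end

section
/- There do not exist four pairwise disjoint nonempty polygons A₁, A₂, A₃, A₄ ∈ P₂ whose closures form a chain cl(A₁) ⊆ cl(A₂) ⊆ cl(A₃) ⊆ cl(A₄). -/
open Set

local notation "E2" => EuclideanSpace ℝ (Fin 2)

/-- A (affine) line in the plane. -/
def IsLine (L : Set (EuclideanSpace ℝ (Fin 2))) : Prop :=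
  ∃ (l : EuclideanSpace ℝ (Fin 2) →ₗ[ℝ] ℝ) (a : ℝ), l ≠ 0 ∧ L = {x | l x = a}

lemma lin_cont (l : E2 →ₗ[ℝ] ℝ) : Continuous l :=
  l.continuous_of_finiteDimensional

lemma IsLine.isClosed {L : Set E2} (hL : IsLine L) : IsClosed L := by
  obtain ⟨l, a, -, rfl⟩ := hL
  exact isClosed_eq (lin_cont l) continuous_const

lemma IsLine.interior_empty {L : Set E2} (hL : IsLine L) : interior L = ∅ := by
  obtain ⟨l, a, hl, rfl⟩ := hL
  by_contra h
  obtain ⟨x, hx⟩ := nonempty_iff_ne_empty.mpr h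
  obtain ⟨v, hv⟩ : ∃ v : E2, l v ≠ 0 := by
    by_contra h'
    push_neg at h'
    exact hl (LinearMap.ext fun v => h' v)
  rw [mem_interior_iff_mem_nhds, Metric.mem_nhds_iff] at hx
  obtain ⟨ε, hε, hball⟩ := hx
  set δ : ℝ := ε / (2 * (‖v‖ + 1)) with hδ
  have hvpos : (0:ℝ) < ‖v‖ + 1 := by positivity
  have hδpos : 0 < δ := by positivity
  have h1 : x + δ • v ∈ Metric.ball x ε := by
    rw [Metric.mem_ball, dist_eq_norm]
    have : x + δ • v - x = δ • v := by abel
    rw [this, norm_smul, Real.norm_eq_abs, abs_of_pos hδpos]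
    calc δ * ‖v‖ ≤ δ * (‖v‖ + 1) := by nlinarith [norm_nonneg v]
      _ = ε / 2 := by rw [hδ]; field_simp
      _ < ε := by linarith
  have h2 : l (x + δ • v) = a := hball h1
  have h3 : l x = a := by
    have := hball (Metric.mem_ball_self hε); exact this
  rw [map_add, map_smul, smul_eq_mul, h3] at h2
  have : δ * l v = 0 := by linarith
  rcases mul_eq_zero.mp this with h | h
  · exact absurd h (ne_of_gt hδpos)
  · exact hv h

lemma interior_union_empty {X : Type*} [TopologicalSpace X] {s t : Set X} (hs : IsClosed s)
    (hsi : interior s = ∅) (hti : interior t = ∅) : interior (s ∪ t) = ∅ := by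
  have h1 : interior (s ∪ t) ∩ sᶜ ⊆ interior t := by
    intro x hx
    refine mem_interior.mpr ⟨interior (s ∪ t) ∩ sᶜ, ?_, isOpen_interior.inter hs.isOpen_compl, hx⟩
    intro y ⟨hy1, hy2⟩
    rcases interior_subset hy1 with h | h
    · exact absurd h hy2
    · exact h
  rw [hti, subset_empty_iff, ← disjoint_iff_inter_eq_empty, disjoint_compl_right_iff_subset] at h1
  have := interior_maximal h1 isOpen_interior
  rw [hsi, subset_empty_iff] at this
  exact this

lemma sUnion_lines {S : Set (Set E2)} (hfin : S.Finite) :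
    (∀ L ∈ S, IsLine L) → IsClosed (⋃₀ S) ∧ interior (⋃₀ S) = ∅ := by
  induction S, hfin using Set.Finite.induction_on with
  | empty => simp
  | @insert L S hLS hSfin ih =>
    intro h
    have hL := h L (mem_insert _ _)
    obtain ⟨hc, hi⟩ := ih (fun M hM => h M (mem_insert_of_mem _ hM))
    rw [sUnion_insert]
    exact ⟨hL.isClosed.union hc, interior_union_empty hL.isClosed hL.interior_empty hi⟩

lemma frontier_halfSpace_subset (l : E2 →ₗ[ℝ] ℝ) (a : ℝ) :
    frontier {x : E2 | l x ≤ a} ⊆ {x : E2 | l x = a} := by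
  intro x hx
  rw [frontier_eq_closure_inter_closure] at hx
  obtain ⟨h1, h2⟩ := hx
  have hle : l x ≤ a := (isClosed_le (lin_cont l) continuous_const).closure_subset h1
  have hge : a ≤ l x := by
    have : closure {x : E2 | l x ≤ a}ᶜ ⊆ {x : E2 | a ≤ l x} := by
      apply closure_minimal
      · intro y hy
        simp only [mem_compl_iff, mem_setOf_eq, not_le] at hy
        exact le_of_lt hy
      · exact isClosed_le continuous_const (lin_cont l)
    exact this h2
  exact le_antisymm hle hge

lemma frontier_sub_lines {A : Set E2} (hA : BoolGen (halfSpaces 2) A) :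
    ∃ S : Set (Set E2), S.Finite ∧ (∀ L ∈ S, IsLine L) ∧ frontier A ⊆ ⋃₀ S := by
  induction hA with
  | base A h =>
    obtain ⟨l, a, rfl⟩ := h
    by_cases hl : l = 0
    · subst hl
      refine ⟨∅, finite_empty, by simp, ?_⟩
      by_cases ha : (0:ℝ) ≤ a
      · have : {x : E2 | (0 : E2 →ₗ[ℝ] ℝ) x ≤ a} = univ :=
          eq_univ_of_forall fun x => by simpa using ha
        rw [this, frontier_univ]; simp
      · have : {x : E2 | (0 : E2 →ₗ[ℝ] ℝ) x ≤ a} = ∅ := by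
          ext x; simpa using ha
        rw [this, frontier_empty]; simp
    · refine ⟨{{x : E2 | l x = a}}, finite_singleton _, ?_, ?_⟩
      · rintro L rfl
        exact ⟨l, a, hl, rfl⟩
      · rw [sUnion_singleton]
        exact frontier_halfSpace_subset l a
  | empty => exact ⟨∅, finite_empty, by simp, by simp⟩
  | univ => exact ⟨∅, finite_empty, by simp, by simp⟩
  | union A B _ _ ihA ihB =>
    obtain ⟨S, hSf, hSl, hSs⟩ := ihA
    obtain ⟨T, hTf, hTl, hTs⟩ := ihB
    refine ⟨S ∪ T, hSf.union hTf, ?_, ?_⟩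
    · rintro L (h | h); exacts [hSl L h, hTl L h]
    · refine (frontier_union_subset A B).trans ?_
      rw [sUnion_union]
      exact union_subset_union (inter_subset_left.trans hSs) (inter_subset_right.trans hTs)
  | inter A B _ _ ihA ihB =>
    obtain ⟨S, hSf, hSl, hSs⟩ := ihA
    obtain ⟨T, hTf, hTl, hTs⟩ := ihB
    refine ⟨S ∪ T, hSf.union hTf, ?_, ?_⟩
    · rintro L (h | h); exacts [hSl L h, hTl L h]
    · refine (frontier_inter_subset A B).trans ?_
      rw [sUnion_union]
      exact union_subset_union (inter_subset_left.trans hSs) (inter_subset_right.trans hTs)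
  | compl A _ ihA =>
    obtain ⟨S, hSf, hSl, hSs⟩ := ihA
    exact ⟨S, hSf, hSl, by rwa [frontier_compl]⟩

lemma frontier_mul_le_finite (b c : ℝ) : (frontier {t : ℝ | t * b ≤ c}).Finite := by
  rcases lt_trichotomy b 0 with hb | hb | hb
  · have : {t : ℝ | t * b ≤ c} = Ici (c / b) := by
      ext t
      simp only [mem_setOf_eq, mem_Ici]
      rw [div_le_iff_of_neg hb]
    rw [this, frontier_Ici]
    exact finite_singleton _
  · subst hb
    by_cases hc : (0:ℝ) ≤ c
    · have : {t : ℝ | t * 0 ≤ c} = univ := eq_univ_of_forall fun t => by simpa using hc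
      rw [this, frontier_univ]; exact finite_empty
    · have : {t : ℝ | t * 0 ≤ c} = ∅ := by ext t; simpa using hc
      rw [this, frontier_empty]; exact finite_empty
  · have : {t : ℝ | t * b ≤ c} = Iic (c / b) := by
      ext t
      simp only [mem_setOf_eq, mem_Iic]
      rw [le_div_iff₀ hb]
    rw [this, frontier_Iic]
    exact finite_singleton _

lemma frontier_line_finite {A : Set E2} (hA : BoolGen (halfSpaces 2) A) (p v : E2) :
    (frontier ((fun t : ℝ => p + t • v) ⁻¹' A)).Finite := by
  induction hA with
  | base A h =>
    obtain ⟨l, a, rfl⟩ := h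
    have : (fun t : ℝ => p + t • v) ⁻¹' {x : E2 | l x ≤ a} = {t : ℝ | t * l v ≤ a - l p} := by
      ext t
      simp only [mem_preimage, mem_setOf_eq, map_add, map_smul, smul_eq_mul]
      constructor <;> intro h <;> linarith
    rw [this]
    exact frontier_mul_le_finite _ _
  | empty => simp
  | univ => simp
  | union A B _ _ ihA ihB =>
    rw [preimage_union]
    exact ((ihA.union ihB).subset ((frontier_union_subset _ _).trans
      (union_subset_union inter_subset_left inter_subset_right)))
  | inter A B _ _ ihA ihB =>
    rw [preimage_inter]
    exact ((ihA.union ihB).subset ((frontier_inter_subset _ _).trans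
      (union_subset_union inter_subset_left inter_subset_right)))
  | compl A _ ihA =>
    rw [preimage_compl, frontier_compl]
    exact ihA

lemma line_piece_finite {A : Set E2} (hA : BoolGen (halfSpaces 2) A) {L : Set E2}
    (hL : IsLine L) : (closure (A ∩ L) \ (A ∩ L)).Finite := by
  classical
  obtain ⟨l, a, hl, rfl⟩ := hL
  obtain ⟨x0, hx0⟩ : ∃ x0 : E2, l x0 ≠ 0 := by
    by_contra h'; push_neg at h'; exact hl (LinearMap.ext fun x => h' x)
  -- a point on the line
  set p : E2 := (a / l x0) • x0 with hp
  have hpl : l p = a := by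
    rw [hp, map_smul, smul_eq_mul, div_mul_cancel₀ _ hx0]
  -- a unit direction vector in the kernel
  have hdim : Module.finrank ℝ E2 = 2 := finrank_euclideanSpace_fin
  have hrn := LinearMap.finrank_range_add_finrank_ker l
  have hrange : Module.finrank ℝ (LinearMap.range l) ≤ 1 :=
    le_trans (Submodule.finrank_le _) (by simp [Module.finrank_self])
  have hkerpos : 0 < Module.finrank ℝ (LinearMap.ker l) := by omega
  have hkerbot : LinearMap.ker l ≠ ⊥ := by
    intro h
    rw [h, finrank_bot] at hkerpos
    exact lt_irrefl 0 hkerpos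
  obtain ⟨v0, hv0ker, hv0⟩ := Submodule.exists_mem_ne_zero_of_ne_bot hkerbot
  set v : E2 := ‖v0‖⁻¹ • v0 with hv
  have hvnorm : ‖v‖ = 1 := norm_smul_inv_norm hv0
  have hvne : v ≠ 0 := by
    intro h; rw [h, norm_zero] at hvnorm; norm_num at hvnorm
  have hvker : v ∈ LinearMap.ker l := Submodule.smul_mem _ _ hv0ker
  have hvl : l v = 0 := hvker
  -- kernel is the span of v
  have hrangene : Module.finrank ℝ (LinearMap.range l) ≠ 0 := by
    intro h
    rw [Submodule.finrank_eq_zero] at h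
    exact hx0 (by simpa [h] using LinearMap.mem_range_self l x0)
  have hker1 : Module.finrank ℝ (LinearMap.ker l) = 1 := by omega
  have hspan : Submodule.span ℝ {v} = LinearMap.ker l := by
    apply Submodule.eq_of_le_of_finrank_le
    · rw [Submodule.span_le, singleton_subset_iff]; exact hvker
    · rw [hker1, finrank_span_singleton hvne]
  -- the parametrization
  set γ : ℝ → E2 := fun t => p + t • v with hγ
  have hiso : Isometry γ := by
    apply Isometry.of_dist_eq
    intro s t
    rw [hγ]
    simp only
    rw [dist_eq_norm, dist_eq_norm]
    have : p + s • v - (p + t • v) = (s - t) • v := by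
      rw [sub_smul]; abel
    rw [this, norm_smul, hvnorm, mul_one, Real.norm_eq_abs]
  have hrangeγ : range γ = {x : E2 | l x = a} := by
    ext x
    constructor
    · rintro ⟨t, rfl⟩
      simp only [hγ, mem_setOf_eq, map_add, map_smul, smul_eq_mul, hpl, hvl, mul_zero, add_zero]
    · intro hx
      have : x - p ∈ LinearMap.ker l := by
        rw [LinearMap.mem_ker, map_sub, hx, hpl, sub_self]
      rw [← hspan, Submodule.mem_span_singleton] at this
      obtain ⟨t, ht⟩ := this
      exact ⟨t, by rw [hγ]; simp only; rw [ht]; abel⟩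
  have hemb := hiso.isClosedEmbedding
  set S : Set ℝ := γ ⁻¹' A with hS
  have hTeq : A ∩ {x : E2 | l x = a} = γ '' S := by
    rw [hS, image_preimage_eq_inter_range, hrangeγ]
  rw [hTeq, hemb.closure_image_eq]
  have hsub : γ '' closure S \ γ '' S ⊆ γ '' (closure S \ S) := by
    rintro x ⟨⟨y, hy, rfl⟩, hx2⟩
    exact ⟨y, ⟨hy, fun h => hx2 ⟨y, h, rfl⟩⟩, rfl⟩
  apply Finite.subset _ hsub
  apply Finite.image
  apply Finite.subset (frontier_line_finite hA p v)
  intro t ⟨ht1, ht2⟩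
  exact ⟨ht1, fun h => ht2 (interior_subset h)⟩

lemma closure_diff_finite {A : Set E2} (hA : BoolGen (halfSpaces 2) A)
    (hint : interior A = ∅) : (closure A \ A).Finite := by
  obtain ⟨S, hSfin, hSlines, hfr⟩ := frontier_sub_lines hA
  have hAsub : A ⊆ ⋃₀ S := by
    intro x hx
    have : x ∈ closure A := subset_closure hx
    rw [closure_eq_interior_union_frontier, hint, empty_union] at this
    exact hfr this
  have hAeq : A = ⋃ L ∈ S, A ∩ L := by
    ext x
    simp only [mem_iUnion, mem_inter_iff, exists_prop]
    constructor
    · intro hx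
      obtain ⟨L, hL, hxL⟩ := hAsub hx
      exact ⟨L, hL, hx, hxL⟩
    · rintro ⟨L, _, hx, _⟩; exact hx
  have hclA : closure A = ⋃ L ∈ S, closure (A ∩ L) := by
    conv_lhs => rw [hAeq]
    exact hSfin.closure_biUnion _
  have hsub : closure A \ A ⊆ ⋃ L ∈ S, (closure (A ∩ L) \ (A ∩ L)) := by
    intro x ⟨hx1, hx2⟩
    rw [hclA] at hx1
    simp only [mem_iUnion, exists_prop] at hx1 ⊢
    obtain ⟨L, hL, hxL⟩ := hx1
    exact ⟨L, hL, hxL, fun h => hx2 h.1⟩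
  exact Finite.subset (hSfin.biUnion fun L hL => line_piece_finite hA (hSlines L hL)) hsub

/-- There are no four pairwise disjoint nonempty polygons of the plane whose closures
form a chain `cl(A₁) ⊆ cl(A₂) ⊆ cl(A₃) ⊆ cl(A₄)`. -/
theorem no_four_disjoint_polygons_with_chained_closures :
    ¬ ∃ A : Fin 4 → Set (EuclideanSpace ℝ (Fin 2)),
      (∀ i, BoolGen (halfSpaces 2) (A i)) ∧
      (∀ i, (A i).Nonempty) ∧
      (∀ i j, i ≠ j → A i ∩ A j = ∅) ∧
      closure (A 0) ⊆ closure (A 1) ∧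
      closure (A 1) ⊆ closure (A 2) ∧
      closure (A 2) ⊆ closure (A 3) := by
  rintro ⟨A, hGen, hNe, hDisj, h01, h12, h23⟩
  -- A 2 is contained in the frontier of A 3, hence has empty interior
  have hsub23 : A 2 ⊆ closure (A 3) \ A 3 := by
    intro x hx
    refine ⟨h23 (subset_closure hx), fun h => ?_⟩
    have := hDisj 2 3 (by decide)
    exact absurd (mem_inter hx h) (by rw [this]; exact notMem_empty x)
  have hint2 : interior (A 2) = ∅ := by
    obtain ⟨S, hSfin, hSlines, hfr⟩ := frontier_sub_lines (hGen 3)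
    obtain ⟨-, hSint⟩ := sUnion_lines hSfin hSlines
    have hA2fr : A 2 ⊆ ⋃₀ S := by
      intro x hx
      obtain ⟨h1, h2⟩ := hsub23 hx
      exact hfr ⟨h1, fun h => h2 (interior_subset h)⟩
    have := interior_mono hA2fr
    rw [hSint, subset_empty_iff] at this
    exact this
  -- hence closure (A 2) \ A 2 is finite, and A 1 sits inside it
  have hfin2 : (closure (A 2) \ A 2).Finite := closure_diff_finite (hGen 2) hint2
  have hA1sub : A 1 ⊆ closure (A 2) \ A 2 := by
    intro x hx
    refine ⟨h12 (subset_closure hx), fun h => ?_⟩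
    have := hDisj 1 2 (by decide)
    exact absurd (mem_inter hx h) (by rw [this]; exact notMem_empty x)
  have hA1fin : (A 1).Finite := hfin2.subset hA1sub
  have hA1closed : IsClosed (A 1) := hA1fin.isClosed
  have hA0sub : A 0 ⊆ A 1 := by
    intro x hx
    have : x ∈ closure (A 1) := h01 (subset_closure hx)
    rwa [hA1closed.closure_eq] at this
  obtain ⟨x, hx⟩ := hNe 0
  have := hDisj 0 1 (by decide)
  exact absurd (mem_inter hx (hA0sub hx)) (by rw [this]; exact notMem_empty x)
end
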